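/- arXiv:1410.2170 — 4 statements merged into one kernel-verified Lean document; each statement's English description precedes it below -/
import Mathlib

section
/- Let p be an odd prime and fix c ∈ F_p^×. Let ρ: A → V be the F_p-algebra homomorphism determined by ρ(λ1) = λ1, ρ(λ2) = 0 and ρ(μ2) = c·κ^p; let τ: W → A be a degree-preserving F_p-linear map and ∂: V → W an F_p-linear map with ∂(V_n) ⊆ W_{n−1} for all n; and assume there are signs ε_τ, ε_∂ ∈ {1, −1} with τ(λ1·w) = ε_τ·λ1·τ(w) for all w ∈ W and ∂(λ1·v) = ε_∂·λ1·∂(v) for all v ∈ V. If the image of τ equals the kernel of ρ and the image of ρ equals the kernel of ∂, then: (a) τ(ε1·μ1^{p−1}) = a·λ2 for some a ∈ F_p^×; (b) for every k ≥ 0 there is b ∈ F_p^× with ∂(δ·κ^k) = b·μ1^k; (c) for every k ≥ 1 not divisible by p there are α ∈ F_p^× and β ∈ F_p with ∂(κ^k) = α·ε1·μ1^{k−1} + β·λ1·μ1^{k−1}. -/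
noncomputable section

/-- The monomial `x^{i.1} * y^{i.2.1} * z^{i.2.2}` (Boolean exponents for the first two
exterior generators) in an algebra containing elements `x`, `y`, `z`. -/
def triMon {R : Type*} [Ring R] (x y z : R) (i : Bool × Bool × ℕ) : R :=
  (if i.1 then x else 1) * (if i.2.1 then y else 1) * z ^ i.2.2

/-- The degree of the monomial indexed by `i`, when the three generators have
degrees `dx`, `dy`, `dz`. -/
def triDeg (dx dy dz : ℕ) (i : Bool × Bool × ℕ) : ℤ :=
  (if i.1 then (dx : ℤ) else 0) + (if i.2.1 then (dy : ℤ) else 0) + (dz : ℤ) * i.2.2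

/-- The homogeneous component of degree `n`: the span of the monomials of degree `n`. -/
def triPiece {F R : Type*} [CommRing F] [Ring R] [Algebra F R]
    (x y z : R) (dx dy dz : ℕ) (n : ℤ) : Submodule F R :=
  Submodule.span F (triMon x y z '' {i | triDeg dx dy dz i = n})


section AuxLemmas

open Submodule in
theorem aux_homog_lift {F M N ι κ' : Type*} [Field F] [AddCommGroup M] [Module F M]
    [AddCommGroup N] [Module F N]
    {v : ι → M} (hsp : Submodule.span F (Set.range v) = ⊤)
    {w : κ' → N} (hind' : LinearIndependent F w)
    (dM : ι → ℤ) (dN : κ' → ℤ)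
    (f : M →ₗ[F] N)
    (hf : ∀ i, f (v i) ∈ Submodule.span F (w '' {j | dN j = dM i}))
    (n : ℤ) (y : N) (hy : y ∈ Submodule.span F (w '' {j | dN j = n}))
    (hyr : y ∈ LinearMap.range f) :
    ∃ x ∈ Submodule.span F (v '' {i | dM i = n}), f x = y := by
  classical
  obtain ⟨x0, hx0⟩ := hyr
  have hx0mem : x0 ∈ Submodule.span F (Set.range v) := by rw [hsp]; trivial
  obtain ⟨c, hc⟩ := Finsupp.mem_span_range_iff_exists_finsupp.mp hx0mem
  rw [Finsupp.sum] at hc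
  set sg := c.support.filter (fun i => dM i = n) with hsg
  set x : M := ∑ i ∈ sg, c i • v i with hxdef
  have hxmem : x ∈ Submodule.span F (v '' {i | dM i = n}) := by
    refine Submodule.sum_mem _ fun i hi => Submodule.smul_mem _ _ (Submodule.subset_span ?_)
    exact ⟨i, (Finset.mem_filter.mp hi).2, rfl⟩
  refine ⟨x, hxmem, ?_⟩
  have hsplit : x0 = x + ∑ i ∈ c.support.filter (fun i => ¬ dM i = n), c i • v i := by
    rw [hxdef, hsg, Finset.sum_filter_add_sum_filter_not, hc]
  have hgood : f x ∈ Submodule.span F (w '' {j | dN j = n}) := by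
    rw [hxdef, map_sum]
    refine Submodule.sum_mem _ fun i hi => ?_
    rw [map_smul]
    refine Submodule.smul_mem _ _ ?_
    have hdi : dM i = n := (Finset.mem_filter.mp hi).2
    have := hf i
    rwa [hdi] at this
  have hbad : y - f x ∈ Submodule.span F (w '' {j | ¬ dN j = n}) := by
    have heq : y - f x = ∑ i ∈ c.support.filter (fun i => ¬ dM i = n), c i • f (v i) := by
      rw [← hx0]
      conv_lhs => rw [hsplit]
      rw [map_add, map_sum]
      simp [map_smul]
    rw [heq]
    refine Submodule.sum_mem _ fun i hi => Submodule.smul_mem _ _ ?_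
    have hdi : ¬ dM i = n := (Finset.mem_filter.mp hi).2
    refine Submodule.span_mono (Set.image_mono ?_) (hf i)
    intro j hj
    simp only [Set.mem_setOf_eq] at hj ⊢
    rw [hj]; exact hdi
  have hdisj := hind'.disjoint_span_image (s := {j | dN j = n}) (t := {j | ¬ dN j = n})
    (by simp [Set.disjoint_left])
  have hz : y - f x = 0 :=
    (Submodule.disjoint_def.mp hdisj) _ (sub_mem hy hgood) hbad
  exact (sub_eq_zero.mp hz).symm

theorem aux_ne_smul {F M ι : Type*} [Field F] [AddCommGroup M] [Module F M]
    {v : ι → M} (hv : LinearIndependent F v) {i j : ι} (hij : i ≠ j) (a : F) :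
    v i ≠ a • v j := by
  intro h
  have h0 : Finsupp.linearCombination F v (Finsupp.single i 1 - Finsupp.single j a) = 0 := by
    simp [map_sub, Finsupp.linearCombination_single, h]
  have hl := linearIndependent_iff.mp hv _ h0
  have := DFunLike.congr_fun hl i
  simp [Finsupp.single_apply, hij, Ne.symm hij] at this

-- helper: P*M = P-1 is impossible
theorem aux_PM (P M : ℤ) (hP : 3 ≤ P) (hM : 0 ≤ M) (h : P * M = P - 1) : False := by
  rcases eq_or_lt_of_le hM with h0 | h1
  · rw [← h0, mul_zero] at h; linarith
  · have h1' : 1 ≤ M := h1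
    nlinarith

theorem aux_L1a (P M : ℤ) (h : 2*P^2*M = 2*P^2-1) : False := by
  have h2 : (2:ℤ) ∣ 1 := ⟨P^2 - P^2*M, by linarith⟩
  omega

theorem aux_L1b (P M : ℤ) (hP : 3 ≤ P) (hM : 0 ≤ M) (h : 2*P-1 + 2*P^2*M = 2*P^2-1) : False := by
  have hc : (2*P) * (P*M) = (2*P) * (P-1) := by ring_nf; ring_nf at h; linarith
  exact aux_PM P M hP hM (mul_left_cancel₀ (by linarith : (2*P) ≠ 0) hc)

theorem aux_L1c (P M : ℤ) (hP : 3 ≤ P) (h : 2*P^2-1 + 2*P^2*M = 2*P^2-1) : M = 0 := by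
  have hc : P^2 * M = 0 := by linarith
  rcases mul_eq_zero.mp hc with h0 | h0
  · nlinarith
  · exact h0

theorem aux_L1d (P M : ℤ) (h : (2*P-1) + (2*P^2-1) + 2*P^2*M = 2*P^2-1) : False := by
  have h2 : (2:ℤ) ∣ 1 := ⟨P + P^2*M, by linarith⟩
  omega

theorem aux_L2a (P M : ℤ) (h : 2*P*M = 2*P^2-1) : False := by
  have h2 : (2:ℤ) ∣ 1 := ⟨P^2 - P*M, by linarith⟩
  omega

theorem aux_L2b (P M : ℤ) (hP : 3 ≤ P) (h : 2*P-1 + 2*P*M = 2*P^2-1) : M = P - 1 := by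
  have hc : (2*P) * M = (2*P) * (P-1) := by ring_nf; ring_nf at h; linarith
  exact mul_left_cancel₀ (by linarith : (2*P) ≠ 0) hc

theorem aux_L2d (P M : ℤ) (h : (2*P-1) + (2*P-1) + 2*P*M = 2*P^2-1) : False := by
  have h2 : (2:ℤ) ∣ 1 := ⟨2*P + P*M - P^2, by linarith⟩
  omega

theorem aux_L3a (P M : ℤ) (hP : 3 ≤ P) (hM : 0 ≤ M) (h : 2*P^2*M = 2*P^2-2*P) : False := by
  have hc : (2*P) * (P*M) = (2*P) * (P-1) := by ring_nf; ring_nf at h; linarith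
  exact aux_PM P M hP hM (mul_left_cancel₀ (by linarith : (2*P) ≠ 0) hc)

theorem aux_L3b (P M : ℤ) (h : 2*P-1 + 2*P^2*M = 2*P^2-2*P) : False := by
  have h2 : (2:ℤ) ∣ 1 := ⟨2*P + P^2*M - P^2, by linarith⟩
  omega

theorem aux_L3c (P M : ℤ) (h : 2*P^2-1 + 2*P^2*M = 2*P^2-2*P) : False := by
  have h2 : (2:ℤ) ∣ 1 := ⟨P^2*M + P, by linarith⟩
  omega

theorem aux_L3d (P M : ℤ) (hP : 3 ≤ P) (hM : 0 ≤ M) (h : (2*P-1) + (2*P^2-1) + 2*P^2*M = 2*P^2-2*P) : False := by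
  have := mul_nonneg (sq_nonneg P) hM
  nlinarith

theorem aux_L4a (P M K : ℤ) (hP : 3 ≤ P) (h : 2*P*M = 1 + 2*P*K - 1) : M = K := by
  have hc : (2*P) * M = (2*P) * K := by linarith
  exact mul_left_cancel₀ (by linarith : (2*P) ≠ 0) hc

theorem aux_L4b (P M K : ℤ) (h : 2*P-1 + 2*P*M = 1 + 2*P*K - 1) : False := by
  have h2 : (2:ℤ) ∣ 1 := ⟨P + P*M - P*K, by linarith⟩
  omega

theorem aux_L4d (P M K : ℤ) (hP : 3 ≤ P) (h : (2*P-1) + (2*P-1) + 2*P*M = 1 + 2*P*K - 1) : False := by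
  have hc : (2:ℤ) * (P * (2 + M - K)) = 2 * 1 := by ring_nf; ring_nf at h; linarith
  have h3 : P * (2 + M - K) = 1 := mul_left_cancel₀ two_ne_zero hc
  have hdvd : P ∣ 1 := ⟨2 + M - K, h3.symm⟩
  have := Int.le_of_dvd one_pos hdvd
  linarith

theorem aux_L5a (P M K : ℤ) (h : 2*P^2*M = 1 + 2*P*K) : False := by
  have h2 : (2:ℤ) ∣ 1 := ⟨P^2*M - P*K, by linarith⟩
  omega

theorem aux_L5b (P M K : ℤ) (hP : 3 ≤ P) (h : 2*P-1 + 2*P^2*M = 1 + 2*P*K) : False := by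
  have hc : (2:ℤ) * (P * (1 + P*M - K)) = 2 * 1 := by ring_nf; ring_nf at h; linarith
  have h3 : P * (1 + P*M - K) = 1 := mul_left_cancel₀ two_ne_zero hc
  have := Int.le_of_dvd one_pos ⟨1 + P*M - K, h3.symm⟩
  linarith

theorem aux_L5c (P M K : ℤ) (hP : 3 ≤ P) (h : 2*P^2-1 + 2*P^2*M = 1 + 2*P*K) : False := by
  have hc : (2:ℤ) * (P * (P + P*M - K)) = 2 * 1 := by ring_nf; ring_nf at h; linarith
  have h3 : P * (P + P*M - K) = 1 := mul_left_cancel₀ two_ne_zero hc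
  have := Int.le_of_dvd one_pos ⟨P + P*M - K, h3.symm⟩
  linarith

theorem aux_L5d (P M K : ℤ) (h : (2*P-1) + (2*P^2-1) + 2*P^2*M = 1 + 2*P*K) : False := by
  have h2 : (2:ℤ) ∣ 3 := ⟨P + P^2 + P^2*M - P*K, by linarith⟩
  omega

theorem aux_L6a (P M K : ℤ) (h : 2*P*M = 2*P*K - 1) : False := by
  have h2 : (2:ℤ) ∣ 1 := ⟨P*K - P*M, by linarith⟩
  omega

theorem aux_L6b (P M K : ℤ) (hP : 3 ≤ P) (h : 2*P-1 + 2*P*M = 2*P*K - 1) : M = K - 1 := by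
  have hc : (2*P) * M = (2*P) * (K-1) := by ring_nf; ring_nf at h; linarith
  exact mul_left_cancel₀ (by linarith : (2*P) ≠ 0) hc

theorem aux_L6d (P M K : ℤ) (h : (2*P-1) + (2*P-1) + 2*P*M = 2*P*K - 1) : False := by
  have h2 : (2:ℤ) ∣ 1 := ⟨2*P + P*M - P*K, by linarith⟩
  omega

theorem aux_L7a (P M K : ℤ) (hP : 3 ≤ P) (h : 2*P^2*M = 2*P*K) : P * M = K := by
  have hc : (2*P) * (P*M) = (2*P) * K := by ring_nf; ring_nf at h; linarith
  exact mul_left_cancel₀ (by linarith : (2*P) ≠ 0) hc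

theorem aux_L7b (P M K : ℤ) (h : 2*P-1 + 2*P^2*M = 2*P*K) : False := by
  have h2 : (2:ℤ) ∣ 1 := ⟨P + P^2*M - P*K, by linarith⟩
  omega

theorem aux_L7c (P M K : ℤ) (h : 2*P^2-1 + 2*P^2*M = 2*P*K) : False := by
  have h2 : (2:ℤ) ∣ 1 := ⟨P^2 + P^2*M - P*K, by linarith⟩
  omega

theorem aux_L7d (P M K : ℤ) (hP : 3 ≤ P) (h : (2*P-1) + (2*P^2-1) + 2*P^2*M = 2*P*K) : False := by
  have hc : (2:ℤ) * (P * (1 + P + P*M - K)) = 2 * 1 := by ring_nf; ring_nf at h; linarith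
  have h3 : P * (1 + P + P*M - K) = 1 := mul_left_cancel₀ two_ne_zero hc
  have := Int.le_of_dvd one_pos ⟨1 + P + P*M - K, h3.symm⟩
  linarith

end AuxLemmas
set_option maxHeartbeats 1000000 in
/-- `W = Λ(ε₁, λ₁) ⊗ F_p[μ₁]`, `A = Λ(λ₁, λ₂) ⊗ F_p[μ₂]` and
`V = Λ(λ₁, δ) ⊗ F_p[κ]` are presented abstractly via their monomial bases and
graded-commutativity relations.  Given the repletion algebra map `ρ : A → V`, a
degree-preserving linear map `τ : W → A` and a degree `-1` linear map `∂ : V → W`,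
commuting with multiplication by `λ₁` up to a sign, such that `im τ = ker ρ` and
`im ρ = ker ∂`, the conclusions (a), (b), (c) of the long exact sequence lemma hold. -/
theorem statement0 (p : ℕ) (hp : p.Prime) (hodd : Odd p)
    -- the algebra W = Λ(ε1, λ1) ⊗ F_p[μ1]
    (W : Type*) [Ring W] [Algebra (ZMod p) W] (ε1 l1W μ1 : W)
    (hWind : LinearIndependent (ZMod p) (triMon ε1 l1W μ1))
    (hWspan : Submodule.span (ZMod p) (Set.range (triMon ε1 l1W μ1)) = ⊤)
    (hε1sq : ε1 * ε1 = 0) (hl1Wsq : l1W * l1W = 0)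
    (hWanti : ε1 * l1W = -(l1W * ε1))
    (hμ1c1 : μ1 * ε1 = ε1 * μ1) (hμ1c2 : μ1 * l1W = l1W * μ1)
    -- the algebra A = Λ(λ1, l2) ⊗ F_p[μ2]
    (A : Type*) [Ring A] [Algebra (ZMod p) A] (l1A l2 μ2 : A)
    (hAind : LinearIndependent (ZMod p) (triMon l1A l2 μ2))
    (hAspan : Submodule.span (ZMod p) (Set.range (triMon l1A l2 μ2)) = ⊤)
    (hl1Asq : l1A * l1A = 0) (hl2sq : l2 * l2 = 0)
    (hAanti : l1A * l2 = -(l2 * l1A))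
    (hμ2c1 : μ2 * l1A = l1A * μ2) (hμ2c2 : μ2 * l2 = l2 * μ2)
    -- the algebra V = Λ(λ1, δ) ⊗ F_p[κ]
    (V : Type*) [Ring V] [Algebra (ZMod p) V] (l1V δ κ : V)
    (hVind : LinearIndependent (ZMod p) (triMon l1V δ κ))
    (hVspan : Submodule.span (ZMod p) (Set.range (triMon l1V δ κ)) = ⊤)
    (hl1Vsq : l1V * l1V = 0) (hδsq : δ * δ = 0)
    (hVanti : l1V * δ = -(δ * l1V))
    (hκc1 : κ * l1V = l1V * κ) (hκc2 : κ * δ = δ * κ)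
    -- the algebra homomorphism ρ : A → V
    (c : ZMod p) (hc : c ≠ 0)
    (ρ : A →ₐ[ZMod p] V)
    (hρ1 : ρ l1A = l1V) (hρ2 : ρ l2 = 0) (hρ3 : ρ μ2 = c • κ ^ p)
    -- the degree-preserving linear map τ : W → A
    (τ : W →ₗ[ZMod p] A)
    (hτdeg : ∀ (n : ℤ) (x : W),
      x ∈ triPiece (F := ZMod p) ε1 l1W μ1 (2*p-1) (2*p-1) (2*p) n →
      τ x ∈ triPiece (F := ZMod p) l1A l2 μ2 (2*p-1) (2*p^2-1) (2*p^2) n)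
    -- the degree -1 linear map ∂ : V → W
    (dl : V →ₗ[ZMod p] W)
    (hdldeg : ∀ (n : ℤ) (x : V),
      x ∈ triPiece (F := ZMod p) l1V δ κ (2*p-1) 1 (2*p) n →
      dl x ∈ triPiece (F := ZMod p) ε1 l1W μ1 (2*p-1) (2*p-1) (2*p) (n-1))
    -- the signs
    (ετ εδ : ZMod p) (hετ : ετ = 1 ∨ ετ = -1) (hεδ : εδ = 1 ∨ εδ = -1)
    (hτl1 : ∀ w : W, τ (l1W * w) = ετ • (l1A * τ w))
    (hdll1 : ∀ v : V, dl (l1V * v) = εδ • (l1W * dl v))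
    -- exactness
    (hexact1 : LinearMap.range τ = LinearMap.ker ρ.toLinearMap)
    (hexact2 : LinearMap.range ρ.toLinearMap = LinearMap.ker dl) :
    -- (a)
    (∃ a : ZMod p, a ≠ 0 ∧ τ (ε1 * μ1 ^ (p - 1)) = a • l2) ∧
    -- (b)
    (∀ k : ℕ, ∃ b : ZMod p, b ≠ 0 ∧ dl (δ * κ ^ k) = b • μ1 ^ k) ∧
    -- (c)
    (∀ k : ℕ, 1 ≤ k → ¬ p ∣ k →
      ∃ α : ZMod p, α ≠ 0 ∧ ∃ β : ZMod p,
        dl (κ ^ k) = α • (ε1 * μ1 ^ (k - 1)) + β • (l1W * μ1 ^ (k - 1))) := by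
  classical
  haveI : Fact p.Prime := ⟨hp⟩
  have hp2 := hp.two_le
  have hp3 : 3 ≤ p := by
    rcases hodd with ⟨t, ht⟩; omega
  have hP3 : (3:ℤ) ≤ (p:ℤ) := by exact_mod_cast hp3
  have c1 : ((2*p-1:ℕ):ℤ) = 2*(p:ℤ)-1 := by omega
  have c4 : ((2*p:ℕ):ℤ) = 2*(p:ℤ) := by omega
  have c2 : ((2*p^2-1:ℕ):ℤ) = 2*(p:ℤ)^2-1 := by
    have h : 1 ≤ 2*p^2 := by nlinarith
    rw [Nat.cast_sub h]; push_cast; ring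
  have c3 : ((2*p^2:ℕ):ℤ) = 2*(p:ℤ)^2 := by push_cast; ring
  have c6 : ((p-1:ℕ):ℤ) = (p:ℤ)-1 := by omega
  have hMnn : ∀ m : ℕ, (0:ℤ) ≤ (m:ℤ) := fun m => Int.natCast_nonneg m
  -- degree-preservation of τ on monomials
  have hf_tau : ∀ i, τ (triMon ε1 l1W μ1 i) ∈
      Submodule.span (ZMod p) (triMon l1A l2 μ2 ''
        {j | triDeg (2*p-1) (2*p^2-1) (2*p^2) j = triDeg (2*p-1) (2*p-1) (2*p) i}) := by
    intro i
    have := hτdeg (triDeg (2*p-1) (2*p-1) (2*p) i) (triMon ε1 l1W μ1 i)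
      (by simp only [triPiece]; exact Submodule.subset_span ⟨i, rfl, rfl⟩)
    simpa [triPiece] using this
  -- degree-preservation of ρ on monomials
  have hf_rho : ∀ i, ρ.toLinearMap (triMon l1A l2 μ2 i) ∈
      Submodule.span (ZMod p) (triMon l1V δ κ ''
        {j | triDeg (2*p-1) 1 (2*p) j = triDeg (2*p-1) (2*p^2-1) (2*p^2) i}) := by
    rintro ⟨a, b, m⟩
    cases b
    case false =>
      have hpow : (ρ μ2)^m = c^m • κ^(p*m) := by rw [hρ3, smul_pow, ← pow_mul]
      have h0 : ρ (triMon l1A l2 μ2 (a, false, m)) = c^m • triMon l1V δ κ (a, false, p*m) := by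
        cases a <;> simp [triMon, map_mul, map_pow, hρ1, hpow, mul_smul_comm]
      simp only [AlgHom.toLinearMap_apply, h0]
      refine Submodule.smul_mem _ _ (Submodule.subset_span ⟨(a, false, p*m), ?_, rfl⟩)
      show triDeg (2*p-1) 1 (2*p) (a,false,p*m) = triDeg (2*p-1) (2*p^2-1) (2*p^2) (a,false,m)
      cases a <;>
        simp only [triDeg, if_true, if_false, Bool.false_eq_true, c1, c3, c4] <;>
        push_cast <;> ring
    case true =>
      have h0 : ρ (triMon l1A l2 μ2 (a, true, m)) = 0 := by
        cases a <;> simp [triMon, map_mul, map_pow, hρ2]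
      simp only [AlgHom.toLinearMap_apply, h0]
      exact Submodule.zero_mem _
  -- τ (μ1^(p-1)) = 0
  have hτμ : τ (μ1 ^ (p-1)) = 0 := by
    have hdeg0 : triDeg (2*p-1) (2*p-1) (2*p) ((false,false,p-1) : Bool × Bool × ℕ)
        = 2*(p:ℤ)^2-2*(p:ℤ) := by
      simp only [triDeg, if_true, if_false, Bool.false_eq_true, c4, c6]; ring
    have hsrc : μ1^(p-1) ∈ triPiece (F := ZMod p) ε1 l1W μ1 (2*p-1) (2*p-1) (2*p)
        (2*(p:ℤ)^2-2*(p:ℤ)) := by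
      simp only [triPiece]
      exact Submodule.subset_span ⟨(false,false,p-1), hdeg0, by simp [triMon]⟩
    have h1 := hτdeg _ _ hsrc
    have hsub : {j | triDeg (2*p-1) (2*p^2-1) (2*p^2) j = 2*(p:ℤ)^2-2*(p:ℤ)} ⊆
        (∅ : Set (Bool × Bool × ℕ)) := by
      rintro ⟨a,b,m⟩ h
      simp only [Set.mem_setOf_eq] at h
      cases a <;> cases b <;>
        simp only [triDeg, if_true, if_false, Bool.false_eq_true, c1, c2, c3] at h
      · exact (aux_L3a (p:ℤ) m hP3 (hMnn m) (by linarith only [h])).elim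
      · exact (aux_L3c (p:ℤ) m (by linarith only [h])).elim
      · exact (aux_L3b (p:ℤ) m (by linarith only [h])).elim
      · exact (aux_L3d (p:ℤ) m hP3 (hMnn m) (by linarith only [h])).elim
    have h2 := Submodule.span_mono (Set.image_mono hsub) (by simpa [triPiece] using h1)
    simpa using h2
  -- part (a)
  have hdegε : triDeg (2*p-1) (2*p-1) (2*p) ((true,false,p-1) : Bool × Bool × ℕ)
      = 2*(p:ℤ)^2-1 := by
    simp only [triDeg, if_true, if_false, Bool.false_eq_true, c1, c4, c6]; ring
  have hsrc1 : ε1 * μ1^(p-1) ∈ triPiece (F := ZMod p) ε1 l1W μ1 (2*p-1) (2*p-1) (2*p)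
      (2*(p:ℤ)^2-1) := by
    simp only [triPiece]
    exact Submodule.subset_span ⟨(true,false,p-1), hdegε, by simp [triMon]⟩
  have h1 := hτdeg _ _ hsrc1
  have hsubA : {j | triDeg (2*p-1) (2*p^2-1) (2*p^2) j = 2*(p:ℤ)^2-1} ⊆
      {((false,true,0) : Bool × Bool × ℕ)} := by
    rintro ⟨a,b,m⟩ h
    simp only [Set.mem_setOf_eq] at h
    cases a <;> cases b <;>
      simp only [triDeg, if_true, if_false, Bool.false_eq_true, c1, c2, c3] at h
    · exact (aux_L1a (p:ℤ) m (by linarith only [h])).elim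
    · have hm : (m:ℤ) = 0 := aux_L1c (p:ℤ) m hP3 (by linarith only [h])
      have hm' : m = 0 := by omega
      simp [hm']
    · exact (aux_L1b (p:ℤ) m hP3 (hMnn m) (by linarith only [h])).elim
    · exact (aux_L1d (p:ℤ) m (by linarith only [h])).elim
  have h1' : τ (ε1 * μ1^(p-1)) ∈ Submodule.span (ZMod p) {l2} := by
    have h2 := Submodule.span_mono (Set.image_mono hsubA) (by simpa [triPiece] using h1)
    rwa [Set.image_singleton,
      show triMon l1A l2 μ2 (false,true,0) = l2 by simp [triMon]] at h2
  obtain ⟨a, ha⟩ := Submodule.mem_span_singleton.mp h1'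
  have hl2mem : l2 ∈ LinearMap.range τ := by
    rw [hexact1]
    exact LinearMap.mem_ker.mpr (by simp [hρ2])
  have hdegl2 : triDeg (2*p-1) (2*p^2-1) (2*p^2) ((false,true,0) : Bool × Bool × ℕ)
      = 2*(p:ℤ)^2-1 := by
    simp only [triDeg, if_true, if_false, Bool.false_eq_true, c2]; ring
  have hl2hom : l2 ∈ Submodule.span (ZMod p) (triMon l1A l2 μ2 ''
      {j | triDeg (2*p-1) (2*p^2-1) (2*p^2) j = 2*(p:ℤ)^2-1}) :=
    Submodule.subset_span ⟨(false,true,0), hdegl2, by simp [triMon]⟩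
  obtain ⟨x, hxmem, hxeq⟩ := aux_homog_lift hWspan hAind
    (triDeg (2*p-1) (2*p-1) (2*p)) (triDeg (2*p-1) (2*p^2-1) (2*p^2)) τ hf_tau
    (2*(p:ℤ)^2-1) l2 hl2hom hl2mem
  have hsubW : {i | triDeg (2*p-1) (2*p-1) (2*p) i = 2*(p:ℤ)^2-1} ⊆
      ({(true,false,p-1), (false,true,p-1)} : Set (Bool × Bool × ℕ)) := by
    rintro ⟨a,b,m⟩ h
    simp only [Set.mem_setOf_eq] at h
    cases a <;> cases b <;>
      simp only [triDeg, if_true, if_false, Bool.false_eq_true, c1, c4] at h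
    · exact (aux_L2a (p:ℤ) m (by linarith only [h])).elim
    · have hm : (m:ℤ) = (p:ℤ)-1 := aux_L2b _ _ hP3 (by linarith only [h])
      have hm' : m = p-1 := by omega
      simp [hm']
    · have hm : (m:ℤ) = (p:ℤ)-1 := aux_L2b _ _ hP3 (by linarith only [h])
      have hm' : m = p-1 := by omega
      simp [hm']
    · exact (aux_L2d (p:ℤ) m (by linarith only [h])).elim
  have hx2 : x ∈ Submodule.span (ZMod p) {ε1 * μ1^(p-1), l1W * μ1^(p-1)} := by
    have h2 := Submodule.span_mono (Set.image_mono hsubW) hxmem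
    rwa [Set.image_pair,
      show triMon ε1 l1W μ1 (true,false,p-1) = ε1*μ1^(p-1) by simp [triMon],
      show triMon ε1 l1W μ1 (false,true,p-1) = l1W*μ1^(p-1) by simp [triMon]] at h2
  obtain ⟨s, t, hst⟩ := Submodule.mem_span_pair.mp hx2
  have hτm2 : τ (l1W * μ1^(p-1)) = 0 := by
    rw [hτl1, hτμ, mul_zero, smul_zero]
  have hτx : τ x = (s * a) • l2 := by
    rw [← hst, map_add, map_smul, map_smul, hτm2, smul_zero, add_zero, ← ha, smul_smul]
  have hl2eq : l2 = (s * a) • l2 := by rw [← hτx, hxeq]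
  have hane : a ≠ 0 := by
    intro h0
    rw [h0, mul_zero, zero_smul] at hl2eq
    exact hAind.ne_zero (false,true,0) (by simpa [triMon] using hl2eq)
  -- part (b)
  have hB : ∀ k : ℕ, ∃ b : ZMod p, b ≠ 0 ∧ dl (δ * κ ^ k) = b • μ1 ^ k := by
    intro k
    have hdegδ : triDeg (2*p-1) 1 (2*p) ((false,true,k) : Bool × Bool × ℕ)
        = 1 + 2*(p:ℤ)*k := by
      simp only [triDeg, if_true, if_false, Bool.false_eq_true, c4, Nat.cast_one]; ring
    have hsrc : δ * κ^k ∈ triPiece (F := ZMod p) l1V δ κ (2*p-1) 1 (2*p) (1 + 2*(p:ℤ)*k) := by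
      simp only [triPiece]
      exact Submodule.subset_span ⟨(false,true,k), hdegδ, by simp [triMon]⟩
    have h1 := hdldeg _ _ hsrc
    have hsub : {i | triDeg (2*p-1) (2*p-1) (2*p) i = 1 + 2*(p:ℤ)*k - 1} ⊆
        {((false,false,k) : Bool × Bool × ℕ)} := by
      rintro ⟨a,b,m⟩ h
      simp only [Set.mem_setOf_eq] at h
      cases a <;> cases b <;>
        simp only [triDeg, if_true, if_false, Bool.false_eq_true, c1, c4] at h
      · have hm : (m:ℤ) = (k:ℤ) := aux_L4a _ _ _ hP3 (by linarith only [h])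
        have hm' : m = k := by omega
        simp [hm']
      · exact (aux_L4b (p:ℤ) m k (by linarith only [h])).elim
      · exact (aux_L4b (p:ℤ) m k (by linarith only [h])).elim
      · exact (aux_L4d (p:ℤ) m k hP3 (by linarith only [h])).elim
    have h1' : dl (δ * κ^k) ∈ Submodule.span (ZMod p) {μ1^k} := by
      have h2 := Submodule.span_mono (Set.image_mono hsub) (by simpa [triPiece] using h1)
      rwa [Set.image_singleton,
        show triMon ε1 l1W μ1 (false,false,k) = μ1^k by simp [triMon]] at h2
    obtain ⟨b, hb⟩ := Submodule.mem_span_singleton.mp h1'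
    refine ⟨b, ?_, hb.symm⟩
    intro hb0
    have hdl0 : dl (δ * κ^k) = 0 := by rw [← hb, hb0, zero_smul]
    have hker : δ * κ^k ∈ LinearMap.range ρ.toLinearMap := by
      rw [hexact2]; exact LinearMap.mem_ker.mpr hdl0
    have hhom : δ * κ^k ∈ Submodule.span (ZMod p) (triMon l1V δ κ ''
        {j | triDeg (2*p-1) 1 (2*p) j = 1 + 2*(p:ℤ)*k}) :=
      Submodule.subset_span ⟨(false,true,k), hdegδ, by simp [triMon]⟩
    obtain ⟨x, hxm, hxe⟩ := aux_homog_lift hAspan hVind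
      (triDeg (2*p-1) (2*p^2-1) (2*p^2)) (triDeg (2*p-1) 1 (2*p)) ρ.toLinearMap hf_rho
      (1 + 2*(p:ℤ)*k) (δ * κ^k) hhom hker
    have hempty : {i | triDeg (2*p-1) (2*p^2-1) (2*p^2) i = 1 + 2*(p:ℤ)*k} ⊆
        (∅ : Set (Bool × Bool × ℕ)) := by
      rintro ⟨a,b',m⟩ h
      simp only [Set.mem_setOf_eq] at h
      cases a <;> cases b' <;>
        simp only [triDeg, if_true, if_false, Bool.false_eq_true, c1, c2, c3] at h
      · exact (aux_L5a (p:ℤ) m k (by linarith only [h])).elim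
      · exact (aux_L5c (p:ℤ) m k hP3 (by linarith only [h])).elim
      · exact (aux_L5b (p:ℤ) m k hP3 (by linarith only [h])).elim
      · exact (aux_L5d (p:ℤ) m k (by linarith only [h])).elim
    have hx0 : x = 0 := by
      have h3 := Submodule.span_mono (Set.image_mono hempty) hxm
      simpa using h3
    rw [hx0, map_zero] at hxe
    exact hVind.ne_zero (false,true,k) (by simpa [triMon] using hxe.symm)
  -- part (c)
  have hC : ∀ k : ℕ, 1 ≤ k → ¬ p ∣ k →
      ∃ α : ZMod p, α ≠ 0 ∧ ∃ β : ZMod p,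
        dl (κ ^ k) = α • (ε1 * μ1 ^ (k - 1)) + β • (l1W * μ1 ^ (k - 1)) := by
    intro k hk1 hkp
    have ck : ((k-1:ℕ):ℤ) = (k:ℤ)-1 := by omega
    have hdegκ : triDeg (2*p-1) 1 (2*p) ((false,false,k) : Bool × Bool × ℕ)
        = 2*(p:ℤ)*k := by
      simp only [triDeg, if_true, if_false, Bool.false_eq_true, c4]; ring
    have hsrc : κ^k ∈ triPiece (F := ZMod p) l1V δ κ (2*p-1) 1 (2*p) (2*(p:ℤ)*k) := by
      simp only [triPiece]
      exact Submodule.subset_span ⟨(false,false,k), hdegκ, by simp [triMon]⟩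
    have h1 := hdldeg _ _ hsrc
    have hsub : {i | triDeg (2*p-1) (2*p-1) (2*p) i = 2*(p:ℤ)*k - 1} ⊆
        ({(true,false,k-1), (false,true,k-1)} : Set (Bool × Bool × ℕ)) := by
      rintro ⟨a,b,m⟩ h
      simp only [Set.mem_setOf_eq] at h
      cases a <;> cases b <;>
        simp only [triDeg, if_true, if_false, Bool.false_eq_true, c1, c4] at h
      · exact (aux_L6a (p:ℤ) m k (by linarith only [h])).elim
      · have hm : (m:ℤ) = (k:ℤ)-1 := aux_L6b _ _ _ hP3 (by linarith only [h])
        have hm' : m = k-1 := by omega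
        simp [hm']
      · have hm : (m:ℤ) = (k:ℤ)-1 := aux_L6b _ _ _ hP3 (by linarith only [h])
        have hm' : m = k-1 := by omega
        simp [hm']
      · exact (aux_L6d (p:ℤ) m k (by linarith only [h])).elim
    have h1' : dl (κ^k) ∈ Submodule.span (ZMod p) {ε1 * μ1^(k-1), l1W * μ1^(k-1)} := by
      have h2 := Submodule.span_mono (Set.image_mono hsub) (by simpa [triPiece] using h1)
      rwa [Set.image_pair,
        show triMon ε1 l1W μ1 (true,false,k-1) = ε1*μ1^(k-1) by simp [triMon],
        show triMon ε1 l1W μ1 (false,true,k-1) = l1W*μ1^(k-1) by simp [triMon]] at h2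
    obtain ⟨α, β, hαβ⟩ := Submodule.mem_span_pair.mp h1'
    refine ⟨α, ?_, β, hαβ.symm⟩
    intro hα0
    obtain ⟨b, hbne, hbeq⟩ := hB (k-1)
    have hεδne : εδ ≠ 0 := by
      rcases hεδ with h | h <;> rw [h]
      · exact one_ne_zero
      · exact neg_ne_zero.mpr one_ne_zero
    have hne2 : εδ * b ≠ 0 := mul_ne_zero hεδne hbne
    have hcoef : (β * (εδ * b)⁻¹) * (εδ * b) = β := by
      rw [mul_assoc, inv_mul_cancel₀ hne2, mul_one]
    have hcomp : dl (l1V * (δ * κ^(k-1))) = (εδ * b) • (l1W * μ1^(k-1)) := by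
      rw [hdll1, hbeq, mul_smul_comm, smul_smul]
    have hker0 : dl (κ^k - (β * (εδ * b)⁻¹) • (l1V * (δ * κ^(k-1)))) = 0 := by
      rw [map_sub, map_smul, hcomp, ← hαβ, hα0, zero_smul, zero_add, smul_smul, hcoef,
        sub_self]
    have hkmem : κ^k - (β * (εδ * b)⁻¹) • (l1V * (δ * κ^(k-1))) ∈
        LinearMap.range ρ.toLinearMap := by
      rw [hexact2]; exact LinearMap.mem_ker.mpr hker0
    have hdegl : triDeg (2*p-1) 1 (2*p) ((true,true,k-1) : Bool × Bool × ℕ)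
        = 2*(p:ℤ)*k := by
      simp only [triDeg, if_true, if_false, Bool.false_eq_true, c1, c4, Nat.cast_one, ck]
      ring
    have hhom : κ^k - (β * (εδ * b)⁻¹) • (l1V * (δ * κ^(k-1))) ∈ Submodule.span (ZMod p)
        (triMon l1V δ κ '' {j | triDeg (2*p-1) 1 (2*p) j = 2*(p:ℤ)*k}) := by
      refine sub_mem (Submodule.subset_span ⟨(false,false,k), hdegκ, by simp [triMon]⟩)
        (Submodule.smul_mem _ _ (Submodule.subset_span ⟨(true,true,k-1), hdegl, ?_⟩))
      simp [triMon, mul_assoc]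
    obtain ⟨x, hxm, hxe⟩ := aux_homog_lift hAspan hVind
      (triDeg (2*p-1) (2*p^2-1) (2*p^2)) (triDeg (2*p-1) 1 (2*p)) ρ.toLinearMap hf_rho
      (2*(p:ℤ)*k) _ hhom hkmem
    have hempty : {i | triDeg (2*p-1) (2*p^2-1) (2*p^2) i = 2*(p:ℤ)*k} ⊆
        (∅ : Set (Bool × Bool × ℕ)) := by
      rintro ⟨a,b',m⟩ h
      simp only [Set.mem_setOf_eq] at h
      cases a <;> cases b' <;>
        simp only [triDeg, if_true, if_false, Bool.false_eq_true, c1, c2, c3] at h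
      · have hPM := aux_L7a (p:ℤ) m k hP3 (by linarith only [h])
        exact (hkp (Int.natCast_dvd_natCast.mp ⟨m, hPM.symm⟩)).elim
      · exact (aux_L7c (p:ℤ) m k (by linarith only [h])).elim
      · exact (aux_L7b (p:ℤ) m k (by linarith only [h])).elim
      · exact (aux_L7d (p:ℤ) m k hP3 (by linarith only [h])).elim
    have hx0 : x = 0 := by
      have h3 := Submodule.span_mono (Set.image_mono hempty) hxm
      simpa using h3
    rw [hx0, map_zero] at hxe
    have hcontra : κ^k = (β * (εδ * b)⁻¹) • (l1V * (δ * κ^(k-1))) :=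
      sub_eq_zero.mp hxe.symm
    have hne := aux_ne_smul hVind
      (i := ((false,false,k) : Bool × Bool × ℕ)) (j := (true,true,k-1))
      (by simp) (β * (εδ * b)⁻¹)
    apply hne
    rw [show triMon l1V δ κ (false,false,k) = κ^k by simp [triMon],
      show triMon l1V δ κ (true,true,k-1) = l1V * (δ * κ^(k-1)) by simp [triMon, mul_assoc]]
    exact hcontra
  exact ⟨⟨a, hane, ha.symm⟩, hB, hC⟩
end
end

section
/- Let p be an odd prime. Let ∂: V → W be an F_p-linear map with ∂(V_n) ⊆ W_{n−1} for all n, whose kernel equals K, and suppose there is a sign ε ∈ {1, −1} with ∂(λ1·v) = ε·λ1·∂(v) for all v ∈ V. Then for every k ≥ 1 not divisible by p there are α ∈ F_p^× and β ∈ F_p with ∂(κ^k) = α·ε1·μ1^{k−1} + β·λ1·μ1^{k−1}. -/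
noncomputable section

/-- With `V = Λ(λ₁, δ) ⊗ F_p[κ]` and `W = Λ(ε₁, λ₁) ⊗ F_p[μ₁]`
presented via their monomial bases, graded as indicated, any linear map
`∂ : V → W` of degree `-1`, whose kernel is the span `K` of the monomials
`κ^{pm}` and `λ₁·κ^{pm}`, and which commutes with multiplication by `λ₁` up to
a sign `ε ∈ {1, -1}`, satisfies `∂(κ^k) = α·ε₁·μ₁^{k-1} + β·λ₁·μ₁^{k-1}` with
`α ≠ 0`, for every `k ≥ 1` not divisible by `p`. -/
theorem statement3 (p : ℕ) (hp : p.Prime) (hodd : Odd p)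
    -- the algebra V = Λ(λ1, δ) ⊗ F_p[κ]
    (V : Type*) [Ring V] [Algebra (ZMod p) V] (l1V δ κ : V)
    (hVind : LinearIndependent (ZMod p) (triMon l1V δ κ))
    (hVspan : Submodule.span (ZMod p) (Set.range (triMon l1V δ κ)) = ⊤)
    (hl1Vsq : l1V * l1V = 0) (hδsq : δ * δ = 0)
    (hVanti : l1V * δ = -(δ * l1V))
    (hκc1 : κ * l1V = l1V * κ) (hκc2 : κ * δ = δ * κ)
    -- the algebra W = Λ(ε1, λ1) ⊗ F_p[μ1]
    (W : Type*) [Ring W] [Algebra (ZMod p) W] (ε1 l1W μ1 : W)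
    (hWind : LinearIndependent (ZMod p) (triMon ε1 l1W μ1))
    (hWspan : Submodule.span (ZMod p) (Set.range (triMon ε1 l1W μ1)) = ⊤)
    (hε1sq : ε1 * ε1 = 0) (hl1Wsq : l1W * l1W = 0)
    (hWanti : ε1 * l1W = -(l1W * ε1))
    (hμ1c1 : μ1 * ε1 = ε1 * μ1) (hμ1c2 : μ1 * l1W = l1W * μ1)
    -- the linear map ∂ : V → W of degree -1
    (dl : V →ₗ[ZMod p] W)
    (hdldeg : ∀ (n : ℤ) (x : V),
      x ∈ triPiece (F := ZMod p) l1V δ κ (2*p-1) 1 (2*p) n →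
      dl x ∈ triPiece (F := ZMod p) ε1 l1W μ1 (2*p-1) (2*p-1) (2*p) (n-1))
    -- the kernel of ∂ is K
    (hker : LinearMap.ker dl =
      Submodule.span (ZMod p)
        (Set.range (fun i : Bool × ℕ => (if i.1 then l1V else 1) * κ ^ (p * i.2))))
    -- the sign condition
    (ε : ZMod p) (hε : ε = 1 ∨ ε = -1)
    (hdll1 : ∀ v : V, dl (l1V * v) = ε • (l1W * dl v)) :
    ∀ k : ℕ, 1 ≤ k → ¬ p ∣ k →
      ∃ α : ZMod p, α ≠ 0 ∧ ∃ β : ZMod p,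
        dl (κ ^ k) = α • (ε1 * μ1 ^ (k - 1)) + β • (l1W * μ1 ^ (k - 1)) := by

  intro k hk hpk
  have hp2 : 2 ≤ p := hp.two_le
  haveI : Fact p.Prime := ⟨hp⟩
  haveI : Fact (1 < p) := ⟨hp.one_lt⟩
  -- κ^k lies in the degree 2pk piece of V
  have hmem : κ ^ k ∈ triPiece (F := ZMod p) l1V δ κ (2*p-1) 1 (2*p) ((2*p*k : ℕ) : ℤ) := by
    apply Submodule.subset_span
    refine ⟨(false, false, k), ?_, ?_⟩
    · show triDeg (2*p-1) 1 (2*p) (false, false, k) = ((2*p*k : ℕ) : ℤ)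
      simp only [triDeg, if_neg Bool.false_ne_true, zero_add]
      push_cast
      ring
    · simp [triMon]
  have hd := hdldeg _ _ hmem
  -- identify the degree 2pk-1 piece of W
  have hset : {i : Bool × Bool × ℕ |
        triDeg (2*p-1) (2*p-1) (2*p) i = ((2*p*k : ℕ) : ℤ) - 1}
      = {(true, false, k-1), (false, true, k-1)} := by
    ext ⟨a, b, c⟩
    simp only [triDeg, Set.mem_setOf_eq, Set.mem_insert_iff, Set.mem_singleton_iff,
      Prod.mk.injEq]
    have hpkc : ((2*p*k : ℕ) : ℤ) = 2*(p:ℤ)*k := by push_cast; ring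
    have h2p1 : ((2*p-1 : ℕ) : ℤ) = 2*(p:ℤ) - 1 := by
      have : 1 ≤ 2*p := by omega
      push_cast [this]
      ring
    have h2p : ((2*p : ℕ) : ℤ) = 2*(p:ℤ) := by push_cast; ring
    rw [hpkc, h2p1, h2p]
    have hpne : (2*(p:ℤ)) ≠ 0 := by
      have : (2:ℤ) ≤ (p:ℤ) := by exact_mod_cast hp2
      linarith
    cases a <;> cases b <;> simp only [if_true, if_false, Bool.false_eq_true,
      Bool.true_eq_false, false_and, and_false, true_and, and_true, or_false,
      false_or, or_self, iff_false, zero_add, add_zero]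
    · -- a = false, b = false : impossible
      intro hE
      have h2 : (2*(p:ℤ)) * ((k:ℤ) - c) = 1 := by ring_nf; ring_nf at hE; linarith
      have hdvd : (2*(p:ℤ)) ∣ 1 := ⟨_, h2.symm⟩
      have := Int.le_of_dvd one_pos hdvd
      omega
    · -- a = false, b = true : c = k - 1
      constructor
      · intro hE
        have h2 : (2*(p:ℤ)) * ((c:ℤ) + 1) = (2*(p:ℤ)) * k := by
          ring_nf; ring_nf at hE; linarith
        have h3 := mul_left_cancel₀ hpne h2
        omega
      · intro hc
        subst hc
        have hck : ((k - 1 : ℕ) : ℤ) = (k:ℤ) - 1 := by omega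
        rw [hck]; ring
    · -- a = true, b = false : c = k - 1
      constructor
      · intro hE
        have h2 : (2*(p:ℤ)) * ((c:ℤ) + 1) = (2*(p:ℤ)) * k := by
          ring_nf; ring_nf at hE; linarith
        have h3 := mul_left_cancel₀ hpne h2
        omega
      · intro hc
        subst hc
        have hck : ((k - 1 : ℕ) : ℤ) = (k:ℤ) - 1 := by omega
        rw [hck]; ring
    · -- a = true, b = true : impossible
      intro hE
      have h2 : (2*(p:ℤ)) * ((k:ℤ) - c - 2) = -1 := by ring_nf; ring_nf at hE; linarith
      have hdvd : (2*(p:ℤ)) ∣ 1 := (dvd_neg).mp ⟨_, h2.symm⟩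
      have := Int.le_of_dvd one_pos hdvd
      omega
  rw [triPiece, hset, Set.image_insert_eq, Set.image_singleton,
    Submodule.mem_span_pair] at hd
  obtain ⟨α, β, hab⟩ := hd
  have hm1 : triMon ε1 l1W μ1 (true, false, k-1) = ε1 * μ1 ^ (k-1) := by simp [triMon]
  have hm2 : triMon ε1 l1W μ1 (false, true, k-1) = l1W * μ1 ^ (k-1) := by simp [triMon]
  rw [hm1, hm2] at hab
  refine ⟨α, ?_, β, hab.symm⟩
  -- suppose α = 0 and derive a contradiction
  intro hα0
  subst hα0
  rw [zero_smul, zero_add] at hab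
  have hz : dl (l1V * κ ^ k) = 0 := by
    rw [hdll1, ← hab, mul_smul_comm, ← mul_assoc, hl1Wsq, zero_mul, smul_zero, smul_zero]
  have hmemK : l1V * κ ^ k ∈ LinearMap.ker dl := hz
  rw [hker] at hmemK
  have hrange : (Set.range (fun i : Bool × ℕ => (if i.1 then l1V else 1) * κ ^ (p * i.2)))
      = triMon l1V δ κ '' Set.range (fun i : Bool × ℕ => (i.1, (false, p * i.2))) := by
    have hfe : (fun i : Bool × ℕ => (if i.1 then l1V else 1) * κ ^ (p * i.2))
        = triMon l1V δ κ ∘ (fun i : Bool × ℕ => (i.1, (false, p * i.2))) := by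
      funext i
      simp [triMon, Function.comp]
    rw [hfe, Set.range_comp]
  rw [hrange] at hmemK
  have hni : (true, (false, k)) ∉
      Set.range (fun i : Bool × ℕ => (i.1, (false, p * i.2))) := by
    rintro ⟨⟨b, m⟩, hi⟩
    simp only [Prod.mk.injEq] at hi
    exact hpk ⟨m, hi.2.2.symm⟩
  refine hVind.notMem_span_image hni ?_
  have hmon : triMon l1V δ κ (true, (false, k)) = l1V * κ ^ k := by simp [triMon]
  rw [hmon]
  exact hmemK
end
end

section
/- Let p ≥ 3 be a prime. There is a unique F_p-algebra homomorphism θ: Θ → R with θ(u) = u, θ(μ) = κ^p, θ(a_i) = u·δ·κ^i for 0 ≤ i ≤ p−1 and θ(b_j) = u·κ^j for 1 ≤ j ≤ p−1. Its image is the F_p-subspace F_p[κ^p] + u·R, and this sum is direct (here F_p[κ^p] is the subalgebra of R generated by κ^p and u·R is the ideal of R generated by u). Its kernel is the free F_p[μ]-submodule of Θ generated by u^{p−2}·a_{p−1}; that is, the elements μ^m·u^{p−2}·a_{p−1} (m ≥ 0) are F_p-linearly independent in Θ and span the kernel of θ. -/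
noncomputable section

/-- Generators of Ausoni's algebra `Θ`: `u`, `μ`, `a_0, …, a_{p-1}` and
`b_0, …, b_{p-1}` (with `b_0` identified with `u` by a relation). -/
inductive ThetaGen (p : ℕ) : Type
  | u : ThetaGen p
  | mu : ThetaGen p
  | a : Fin p → ThetaGen p
  | b : Fin p → ThetaGen p

open MvPolynomial in
/-- The defining relations of Ausoni's algebra `Θ`. -/
def thetaRels (p : ℕ) [NeZero p] : Set (MvPolynomial (ThetaGen p) (ZMod p)) :=
  {q | -- the convention b_0 = u
       q = X (ThetaGen.b 0) - X ThetaGen.u ∨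
       -- u^{p-1} = 0
       q = X (ThetaGen.u) ^ (p - 1) ∨
       -- u^{p-2}·a_i = 0 for 0 ≤ i ≤ p-2
       (∃ i : Fin p, (i : ℕ) ≤ p - 2 ∧ q = X ThetaGen.u ^ (p - 2) * X (ThetaGen.a i)) ∨
       -- u^{p-2}·b_j = 0 for 1 ≤ j ≤ p-1
       (∃ j : Fin p, 1 ≤ (j : ℕ) ∧ q = X ThetaGen.u ^ (p - 2) * X (ThetaGen.b j)) ∨
       -- b_i·b_j = u·b_{i+j} for 1 ≤ i, j ≤ p-1 with i + j ≤ p-1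
       (∃ i j k : Fin p, 1 ≤ (i : ℕ) ∧ 1 ≤ (j : ℕ) ∧ (i : ℕ) + (j : ℕ) ≤ p - 1 ∧
          (k : ℕ) = (i : ℕ) + (j : ℕ) ∧
          q = X (ThetaGen.b i) * X (ThetaGen.b j) - X ThetaGen.u * X (ThetaGen.b k)) ∨
       -- a_i·b_j = u·a_{i+j} for 1 ≤ j ≤ p-1 with i + j ≤ p-1
       (∃ i j k : Fin p, 1 ≤ (j : ℕ) ∧ (i : ℕ) + (j : ℕ) ≤ p - 1 ∧
          (k : ℕ) = (i : ℕ) + (j : ℕ) ∧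
          q = X (ThetaGen.a i) * X (ThetaGen.b j) - X ThetaGen.u * X (ThetaGen.a k)) ∨
       -- b_i·b_j = u·μ·b_{i+j-p} for 1 ≤ i, j ≤ p-1 with i + j ≥ p
       (∃ i j k : Fin p, 1 ≤ (i : ℕ) ∧ 1 ≤ (j : ℕ) ∧ p ≤ (i : ℕ) + (j : ℕ) ∧
          (k : ℕ) + p = (i : ℕ) + (j : ℕ) ∧
          q = X (ThetaGen.b i) * X (ThetaGen.b j) -
              X ThetaGen.u * X ThetaGen.mu * X (ThetaGen.b k)) ∨
       -- a_i·b_j = u·μ·a_{i+j-p} for 1 ≤ j ≤ p-1 with i + j ≥ p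
       (∃ i j k : Fin p, 1 ≤ (j : ℕ) ∧ p ≤ (i : ℕ) + (j : ℕ) ∧
          (k : ℕ) + p = (i : ℕ) + (j : ℕ) ∧
          q = X (ThetaGen.a i) * X (ThetaGen.b j) -
              X ThetaGen.u * X ThetaGen.mu * X (ThetaGen.a k)) ∨
       -- a_i·a_j = 0
       (∃ i j : Fin p, q = X (ThetaGen.a i) * X (ThetaGen.a j)) }

/-- Ausoni's commutative `F_p`-algebra `Θ`, presented by generators and relations. -/
def Theta (p : ℕ) [NeZero p] : Type :=
  MvPolynomial (ThetaGen p) (ZMod p) ⧸ Ideal.span (thetaRels p)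

noncomputable instance (p : ℕ) [NeZero p] : CommRing (Theta p) :=
  Ideal.Quotient.commRing _

noncomputable instance (p : ℕ) [NeZero p] : Algebra (ZMod p) (Theta p) :=
  Ideal.Quotient.algebra _

/-- The generator `u` of `Θ`. -/
def thetaU (p : ℕ) [NeZero p] : Theta p :=
  Ideal.Quotient.mk _ (MvPolynomial.X ThetaGen.u)

/-- The generator `μ` of `Θ`. -/
def thetaMu (p : ℕ) [NeZero p] : Theta p :=
  Ideal.Quotient.mk _ (MvPolynomial.X ThetaGen.mu)

/-- The generators `a_i` of `Θ`. -/
def thetaA (p : ℕ) [NeZero p] (i : Fin p) : Theta p :=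
  Ideal.Quotient.mk _ (MvPolynomial.X (ThetaGen.a i))

/-- The generators `b_j` of `Θ`. -/
def thetaB (p : ℕ) [NeZero p] (j : Fin p) : Theta p :=
  Ideal.Quotient.mk _ (MvPolynomial.X (ThetaGen.b j))

/-- The ideal `(u^{p-1}, δ²)` in `F_p[u, δ, κ]`, where `u = X 0`, `δ = X 1`, `κ = X 2`. -/
def kuRelIdeal (p : ℕ) : Ideal (MvPolynomial (Fin 3) (ZMod p)) :=
  Ideal.span {(MvPolynomial.X 0 : MvPolynomial (Fin 3) (ZMod p)) ^ (p - 1),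
    (MvPolynomial.X 1 : MvPolynomial (Fin 3) (ZMod p)) ^ 2}

/-- The commutative `F_p`-algebra `R = (F_p[u]/(u^{p-1})) ⊗ Λ(δ) ⊗ F_p[κ]`,
realized as `F_p[u, δ, κ]/(u^{p-1}, δ²)`. -/
def KuAlg (p : ℕ) : Type := MvPolynomial (Fin 3) (ZMod p) ⧸ kuRelIdeal p

noncomputable instance (p : ℕ) : CommRing (KuAlg p) := Ideal.Quotient.commRing _

noncomputable instance (p : ℕ) : Algebra (ZMod p) (KuAlg p) := Ideal.Quotient.algebra _

/-- The element `u` of `R`. -/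
def kuU (p : ℕ) : KuAlg p := Ideal.Quotient.mk _ (MvPolynomial.X 0)

/-- The element `δ` of `R`. -/
def kuD (p : ℕ) : KuAlg p := Ideal.Quotient.mk _ (MvPolynomial.X 1)

/-- The element `κ` of `R`. -/
def kuK (p : ℕ) : KuAlg p := Ideal.Quotient.mk _ (MvPolynomial.X 2)

/-- The conditions prescribing the values of `θ` on the generators of `Θ`:
`θ(u) = u`, `θ(μ) = κ^p`, `θ(a_i) = u·δ·κ^i` for `0 ≤ i ≤ p-1` and
`θ(b_j) = u·κ^j` for `1 ≤ j ≤ p-1`. -/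
def thetaValues (p : ℕ) [NeZero p] (θ : Theta p →ₐ[ZMod p] KuAlg p) : Prop :=
  θ (thetaU p) = kuU p ∧
  θ (thetaMu p) = kuK p ^ p ∧
  (∀ i : Fin p, θ (thetaA p i) = kuU p * kuD p * kuK p ^ (i : ℕ)) ∧
  (∀ j : Fin p, 1 ≤ (j : ℕ) → θ (thetaB p j) = kuU p * kuK p ^ (j : ℕ))

/-!
Write `b̃_c = μ^(c/p) b_(c mod p)` and `ã_c = μ^(c/p) a_(c mod p)` for `c : ℕ`. The relations of
`Θ` become the uniform rules `b̃_c b̃_c' = u b̃_(c+c')`, `ã_c b̃_c' = u ã_(c+c')`, `ã_c ã_c' = 0`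
(with `b̃_0 = u`), so `Θ` is spanned by the `μ^m`, `u^k b̃_c`, `u^k ã_c`. Using `u^(p-1) = 0`,
`u^(p-2) b_j = 0` and `u^(p-2) a_i = 0` for `i < p - 1`, the only such elements with `k ≥ p - 2`
that survive are the `μ^m u^(p-2) a_(p-1)`. The remaining ones, with `k < p - 2`, are sent by `θ`
to the distinct standard monomials `κ^(pm)`, `u^(k+1) κ^c`, `u^(k+1) δ κ^c` of `R`, which are
linearly independent; this determines both the kernel and the image of `θ`.

The `μ^m u^(p-2) a_(p-1)` are linearly independent because of the algebra map to `F_p[x, y, z]`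
with `u ↦ y`, `μ ↦ z^p`, `a_i ↦ x y z^i`, `b_j ↦ y z^j`. It lands in the span of the monomials
`x^a y^b z^c` with `a ≤ b` and `p ∣ c` if `b = 0`, and sends every relation either to `0` or to a
monomial that divides `x y^(p-1) z^(pm+p-1)` (the image of `μ^m u^(p-2) a_(p-1)`) only with a
cofactor outside that span. So the coefficient of `x y^(p-1) z^(pm+p-1)` vanishes on the relation
ideal.

The sum `F_p[κ^p] + u R` is direct because the map `R → F_p[X]` killing `u`, `δ` and sending
`κ ↦ X` sends `q(κ^p)` to `q(X^p)` and kills `u R`.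
-/

open MvPolynomial

theorem Nat.div_add_div_add_mod_add_mod_div (a b n : ℕ) :
    a / n + b / n + (a % n + b % n) / n = (a + b) / n := by
  rcases Nat.eq_zero_or_pos n with rfl | hn
  · simp
  conv_rhs => rw [← Nat.div_add_mod a n, ← Nat.div_add_mod b n]
  rw [show n * (a / n) + a % n + (n * (b / n) + b % n) = a % n + b % n + n * (a / n + b / n) by
    ring, Nat.add_mul_div_left _ _ hn]
  ring

open Fin.NatCast in
theorem Fin.natCast_mul_add (n m c : ℕ) [NeZero n] : ((n * m + c : ℕ) : Fin n) = c :=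
  Fin.ext (by rw [Fin.val_natCast, Fin.val_natCast, Nat.mul_add_mod_self_left])

namespace MvPolynomial

variable {σ R : Type*}

theorem coeff_eq_zero_of_mem_span_monomial [CommSemiring R] {s : Set (σ →₀ ℕ)}
    {x : MvPolynomial σ R} (hx : x ∈ Ideal.span ((monomial · (1 : R)) '' s)) {e : σ →₀ ℕ}
    (he : ∀ t ∈ s, ¬ t ≤ e) : coeff e x = 0 := by
  by_contra h
  obtain ⟨t, ht, hte⟩ := mem_ideal_span_monomial_image.mp hx e (mem_support_iff.mpr h)
  exact he t ht hte

theorem linearIndependent_mk_monomial [CommRing R] {I : Ideal (MvPolynomial σ R)} {ι : Type*}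
    {E : ι → σ →₀ ℕ} (hE : Function.Injective E) (hI : ∀ x ∈ I, ∀ i, coeff (E i) x = 0) :
    LinearIndependent R (fun i => Ideal.Quotient.mkₐ R I (monomial (E i) 1)) := by
  refine ((basisMonomials σ R).linearIndependent.comp E hE).map
    (f := (Ideal.Quotient.mkₐ R I).toLinearMap) (Submodule.disjoint_def.mpr fun x hx hxI => ?_)
  have hsupp : (x.support : Set (σ →₀ ℕ)) ⊆ Set.range E := by
    rw [← mem_restrictSupport_iff, restrictSupport_eq_span, ← Set.range_comp]
    exact hx
  ext e
  by_cases he : e ∈ Set.range E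
  · obtain ⟨i, rfl⟩ := he
    exact hI x (Ideal.Quotient.eq_zero_iff_mem.mp hxI) i
  · exact notMem_support_iff.mp fun h => he (hsupp h)

open scoped Pointwise in
def restrictSupportSubalgebra [CommSemiring R] (S : AddSubmonoid (σ →₀ ℕ)) :
    Subalgebra R (MvPolynomial σ R) :=
  (restrictSupport R (S : Set (σ →₀ ℕ))).toSubalgebra
    ((monomial_mem_restrictSupport (R := R)).mpr (.inl S.zero_mem))
    fun _ _ hx hy => restrictSupport_mono (R := R)
      (Set.add_subset_iff.mpr fun _ ha _ hb => S.add_mem ha hb)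
      ((restrictSupport_add (R := R) _ _).symm ▸ Submodule.mul_mem_mul hx hy)

theorem coeff_mul_monomial_eq_zero [CommSemiring R] {s : Set (σ →₀ ℕ)} {q : MvPolynomial σ R}
    (hq : q ∈ restrictSupport R s) {e t : σ →₀ ℕ} (h : e ≤ t → t - e ∉ s) :
    coeff t (q * monomial e 1) = 0 := by
  rw [coeff_mul_monomial']
  split_ifs with he
  · rw [mul_one]
    exact notMem_support_iff.mp fun hm => h he (hq hm)
  · rfl

end MvPolynomial

def expTriple (a b c : ℕ) : Fin 3 →₀ ℕ :=
  Finsupp.single 0 a + Finsupp.single 1 b + Finsupp.single 2 c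

@[simp] theorem expTriple_apply_zero (a b c : ℕ) : expTriple a b c 0 = a := by simp [expTriple]
@[simp] theorem expTriple_apply_one (a b c : ℕ) : expTriple a b c 1 = b := by simp [expTriple]
@[simp] theorem expTriple_apply_two (a b c : ℕ) : expTriple a b c 2 = c := by simp [expTriple]

theorem expTriple_inj {a b c a' b' c' : ℕ} :
    expTriple a b c = expTriple a' b' c' ↔ a = a' ∧ b = b' ∧ c = c' := by
  refine ⟨fun h => ⟨?_, ?_, ?_⟩, by rintro ⟨rfl, rfl, rfl⟩; rfl⟩ <;>
    [simpa using congrArg (· 0) h; simpa using congrArg (· 1) h; simpa using congrArg (· 2) h]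

theorem monomial_expTriple {R : Type*} [CommSemiring R] (a b c : ℕ) :
    monomial (expTriple a b c) (1 : R) = X 0 ^ a * X 1 ^ b * X 2 ^ c := by
  simp only [expTriple, X_pow_eq_monomial, monomial_mul, mul_one]

theorem expTriple_apply_self (e : Fin 3 →₀ ℕ) : expTriple (e 0) (e 1) (e 2) = e := by
  ext i
  fin_cases i <;> simp

theorem expTriple_add (a b c a' b' c' : ℕ) :
    expTriple a b c + expTriple a' b' c' = expTriple (a + a') (b + b') (c + c') := by
  ext i
  fin_cases i <;> simp

theorem expTriple_nsmul (n a b c : ℕ) :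
    n • expTriple a b c = expTriple (n * a) (n * b) (n * c) := by
  ext i
  fin_cases i <;> simp

theorem expTriple_tsub (a b c a' b' c' : ℕ) :
    expTriple a b c - expTriple a' b' c' = expTriple (a - a') (b - b') (c - c') := by
  ext i
  fin_cases i <;> simp

theorem expTriple_le_expTriple {a b c a' b' c' : ℕ} :
    expTriple a b c ≤ expTriple a' b' c' ↔ a ≤ a' ∧ b ≤ b' ∧ c ≤ c' := by
  simp [Finsupp.le_def, Fin.forall_fin_succ]

section ThetaRelations

variable (p : ℕ) [NeZero p]

def thetaMk : MvPolynomial (ThetaGen p) (ZMod p) →ₐ[ZMod p] Theta p :=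
  Ideal.Quotient.mkₐ (ZMod p) _

theorem thetaMk_surjective : Function.Surjective (thetaMk p) :=
  Ideal.Quotient.mkₐ_surjective _ _

theorem thetaMk_eq_zero_of_mem_thetaRels {q : MvPolynomial (ThetaGen p) (ZMod p)}
    (h : q ∈ thetaRels p) : thetaMk p q = 0 :=
  Ideal.Quotient.eq_zero_iff_mem.mpr (Ideal.subset_span h)

theorem thetaMk_eq_of_sub_mem_thetaRels {q r : MvPolynomial (ThetaGen p) (ZMod p)}
    (h : q - r ∈ thetaRels p) : thetaMk p q = thetaMk p r := by
  rw [← sub_eq_zero, ← map_sub]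
  exact thetaMk_eq_zero_of_mem_thetaRels p h

theorem thetaB_zero : thetaB p 0 = thetaU p :=
  thetaMk_eq_of_sub_mem_thetaRels p (Or.inl rfl)

theorem thetaU_pow_sub_one : thetaU p ^ (p - 1) = 0 :=
  (map_pow _ _ _).symm.trans (thetaMk_eq_zero_of_mem_thetaRels p (Or.inr (Or.inl rfl)))

theorem thetaU_pow_sub_two_mul_thetaA {i : Fin p} (hi : (i : ℕ) ≤ p - 2) :
    thetaU p ^ (p - 2) * thetaA p i = 0 := by
  have h := thetaMk_eq_zero_of_mem_thetaRels p (Or.inr (Or.inr (Or.inl ⟨i, hi, rfl⟩)))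
  rwa [map_mul, map_pow] at h

theorem thetaU_pow_sub_two_mul_thetaB_of_one_le {j : Fin p} (hj : 1 ≤ (j : ℕ)) :
    thetaU p ^ (p - 2) * thetaB p j = 0 := by
  have h := thetaMk_eq_zero_of_mem_thetaRels p (Or.inr (Or.inr (Or.inr (Or.inl ⟨j, hj, rfl⟩))))
  rwa [map_mul, map_pow] at h

theorem thetaA_mul_thetaA (i j : Fin p) : thetaA p i * thetaA p j = 0 := by
  have h := thetaMk_eq_zero_of_mem_thetaRels p
    (Or.inr (Or.inr (Or.inr (Or.inr (Or.inr (Or.inr (Or.inr (Or.inr ⟨i, j, rfl⟩))))))))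
  rwa [map_mul] at h

theorem thetaB_mul_thetaB (i j : Fin p) :
    thetaB p i * thetaB p j = thetaU p * thetaMu p ^ ((i + j : ℕ) / p) * thetaB p (i + j) := by
  rcases Nat.eq_zero_or_pos i with hi | hi
  · obtain rfl : i = 0 := Fin.ext hi
    simp [thetaB_zero, Nat.div_eq_of_lt j.isLt]
  rcases Nat.eq_zero_or_pos j with hj | hj
  · obtain rfl : j = 0 := Fin.ext hj
    simp [thetaB_zero, Nat.div_eq_of_lt i.isLt, mul_comm]
  have hval := Fin.val_add_eq_ite i j
  by_cases hs : (i + j : ℕ) < p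
  · rw [if_neg (by omega)] at hval
    have h := thetaMk_eq_of_sub_mem_thetaRels p
      (Or.inr (Or.inr (Or.inr (Or.inr (Or.inl ⟨i, j, i + j, hi, hj, by omega, hval, rfl⟩)))))
    rw [map_mul, map_mul] at h
    rw [Nat.div_eq_of_lt hs, pow_zero, mul_one]
    exact h
  · rw [if_pos (by omega)] at hval
    have h := thetaMk_eq_of_sub_mem_thetaRels p (Or.inr (Or.inr (Or.inr (Or.inr (Or.inr (Or.inr
      (Or.inl ⟨i, j, i + j, hi, hj, by omega, by omega, rfl⟩)))))))
    rw [map_mul, map_mul, map_mul] at h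
    rw [Nat.div_eq_of_lt_le (k := 1) (by omega) (by omega), pow_one]
    exact h

theorem thetaA_mul_thetaB (i j : Fin p) :
    thetaA p i * thetaB p j = thetaU p * thetaMu p ^ ((i + j : ℕ) / p) * thetaA p (i + j) := by
  rcases Nat.eq_zero_or_pos j with hj | hj
  · obtain rfl : j = 0 := Fin.ext hj
    simp [thetaB_zero, Nat.div_eq_of_lt i.isLt, mul_comm]
  have hval := Fin.val_add_eq_ite i j
  by_cases hs : (i + j : ℕ) < p
  · rw [if_neg (by omega)] at hval
    have h := thetaMk_eq_of_sub_mem_thetaRels p (Or.inr (Or.inr (Or.inr (Or.inr (Or.inr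
      (Or.inl ⟨i, j, i + j, hj, by omega, hval, rfl⟩))))))
    rw [map_mul, map_mul] at h
    rw [Nat.div_eq_of_lt hs, pow_zero, mul_one]
    exact h
  · rw [if_pos (by omega)] at hval
    have h := thetaMk_eq_of_sub_mem_thetaRels p (Or.inr (Or.inr (Or.inr (Or.inr (Or.inr (Or.inr
      (Or.inr (Or.inl ⟨i, j, i + j, hj, by omega, by omega, rfl⟩))))))))
    rw [map_mul, map_mul, map_mul] at h
    rw [Nat.div_eq_of_lt_le (k := 1) (by omega) (by omega), pow_one]
    exact h

end ThetaRelations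

section ThetaWeights

open Fin.NatCast

variable (p : ℕ) [NeZero p]

-- `thetaBN p c` and `thetaAN p c` are the `b̃_c` and `ã_c` of the sketch at the top.
def thetaBN (c : ℕ) : Theta p := thetaMu p ^ (c / p) * thetaB p c

def thetaAN (c : ℕ) : Theta p := thetaMu p ^ (c / p) * thetaA p c

theorem thetaBN_val (j : Fin p) : thetaBN p j = thetaB p j := by
  simp [thetaBN, Nat.div_eq_of_lt j.isLt]

theorem thetaAN_val (i : Fin p) : thetaAN p i = thetaA p i := by
  simp [thetaAN, Nat.div_eq_of_lt i.isLt]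

theorem thetaBN_zero : thetaBN p 0 = thetaU p := by
  simpa [thetaB_zero] using thetaBN_val p 0

theorem thetaMu_pow_mul_thetaBN (m c : ℕ) :
    thetaMu p ^ m * thetaBN p c = thetaBN p (p * m + c) := by
  rw [thetaBN, thetaBN, Nat.mul_add_div (NeZero.pos p) m c, Fin.natCast_mul_add, pow_add, mul_assoc]

theorem thetaMu_pow_mul_thetaAN (m c : ℕ) :
    thetaMu p ^ m * thetaAN p c = thetaAN p (p * m + c) := by
  rw [thetaAN, thetaAN, Nat.mul_add_div (NeZero.pos p) m c, Fin.natCast_mul_add, pow_add, mul_assoc]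

theorem thetaBN_mul_thetaBN (c c' : ℕ) :
    thetaBN p c * thetaBN p c' = thetaU p * thetaBN p (c + c') := by
  have h := thetaB_mul_thetaB p c c'
  simp only [Fin.val_natCast, ← Nat.cast_add] at h
  rw [thetaBN, thetaBN, thetaBN, ← Nat.div_add_div_add_mod_add_mod_div, pow_add, pow_add]
  linear_combination thetaMu p ^ (c / p) * thetaMu p ^ (c' / p) * h

theorem thetaAN_mul_thetaBN (c c' : ℕ) :
    thetaAN p c * thetaBN p c' = thetaU p * thetaAN p (c + c') := by
  have h := thetaA_mul_thetaB p c c'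
  simp only [Fin.val_natCast, ← Nat.cast_add] at h
  rw [thetaAN, thetaBN, thetaAN, ← Nat.div_add_div_add_mod_add_mod_div, pow_add, pow_add]
  linear_combination thetaMu p ^ (c / p) * thetaMu p ^ (c' / p) * h

theorem thetaAN_mul_thetaAN (c c' : ℕ) : thetaAN p c * thetaAN p c' = 0 := by
  rw [thetaAN, thetaAN, mul_mul_mul_comm, thetaA_mul_thetaA, mul_zero]

theorem thetaU_pow_sub_two_mul_thetaB (hp : 2 ≤ p) (j : Fin p) :
    thetaU p ^ (p - 2) * thetaB p j = 0 := by
  rcases Nat.eq_zero_or_pos j with hj | hj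
  · rw [show j = 0 from Fin.ext hj, thetaB_zero, ← pow_succ, show p - 2 + 1 = p - 1 by omega,
      thetaU_pow_sub_one]
  · exact thetaU_pow_sub_two_mul_thetaB_of_one_le p hj

theorem thetaU_pow_sub_two_mul_thetaBN (hp : 2 ≤ p) (c : ℕ) :
    thetaU p ^ (p - 2) * thetaBN p c = 0 := by
  rw [thetaBN, mul_left_comm, thetaU_pow_sub_two_mul_thetaB p hp, mul_zero]

end ThetaWeights

section ThetaSpanning

open Fin.NatCast

variable (p : ℕ) [NeZero p]

def kerGen (m : ℕ) : Theta p :=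
  thetaMu p ^ m * thetaU p ^ (p - 2) * thetaA p ⟨p - 1, Nat.sub_lt (NeZero.pos p) one_pos⟩

theorem kerGen_eq (m : ℕ) : kerGen p m = thetaU p ^ (p - 2) * thetaAN p (p * m + (p - 1)) := by
  rw [← thetaMu_pow_mul_thetaAN,
    show p - 1 = ((⟨p - 1, Nat.sub_lt (NeZero.pos p) one_pos⟩ : Fin p) : ℕ) from rfl,
    thetaAN_val, kerGen]
  ring

def NormalIndex : Type := ℕ ⊕ (Fin (p - 2) × ℕ) ⊕ (Fin (p - 2) × ℕ)

def normalForm : NormalIndex p → Theta p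
  | .inl m => thetaMu p ^ m
  | .inr (.inl (k, c)) => thetaU p ^ (k : ℕ) * thetaBN p c
  | .inr (.inr (k, c)) => thetaU p ^ (k : ℕ) * thetaAN p c

def thetaSpan : Submodule (ZMod p) (Theta p) :=
  Submodule.span (ZMod p) (Set.range (kerGen p)) ⊔
    Submodule.span (ZMod p) (Set.range (normalForm p))

variable {p}

theorem normalForm_mem_thetaSpan (i : NormalIndex p) : normalForm p i ∈ thetaSpan p :=
  Submodule.mem_sup_right (Submodule.subset_span ⟨i, rfl⟩)

theorem thetaMu_pow_mem_thetaSpan (m : ℕ) : thetaMu p ^ m ∈ thetaSpan p :=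
  normalForm_mem_thetaSpan (.inl m)

theorem thetaU_pow_eq_zero {k : ℕ} (hk : p - 1 ≤ k) : thetaU p ^ k = 0 := by
  rw [← Nat.sub_add_cancel hk, pow_add, thetaU_pow_sub_one, mul_zero]

theorem thetaU_pow_mul_thetaBN_mem_thetaSpan (hp : 2 ≤ p) (k c : ℕ) :
    thetaU p ^ k * thetaBN p c ∈ thetaSpan p := by
  by_cases hk : k < p - 2
  · exact normalForm_mem_thetaSpan (.inr (.inl (⟨k, hk⟩, c)))
  · rw [← Nat.sub_add_cancel (not_lt.mp hk), pow_add, mul_assoc,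
      thetaU_pow_sub_two_mul_thetaBN p hp, mul_zero]
    exact zero_mem _

theorem thetaU_pow_mul_thetaAN_mem_thetaSpan (hp : 2 ≤ p) (k c : ℕ) :
    thetaU p ^ k * thetaAN p c ∈ thetaSpan p := by
  by_cases hk : k < p - 2
  · exact normalForm_mem_thetaSpan (.inr (.inr (⟨k, hk⟩, c)))
  by_cases hk' : p - 1 ≤ k
  · rw [thetaU_pow_eq_zero hk', zero_mul]
    exact zero_mem _
  obtain rfl : k = p - 2 := by omega
  by_cases hc : c % p = p - 1
  · rw [← Nat.div_add_mod c p, hc, ← kerGen_eq]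
    exact Submodule.mem_sup_left (Submodule.subset_span ⟨_, rfl⟩)
  · have hc' : ((c : Fin p) : ℕ) ≤ p - 2 := by
      have := Nat.mod_lt c (NeZero.pos p)
      rw [Fin.val_natCast]; omega
    rw [thetaAN, mul_left_comm, thetaU_pow_sub_two_mul_thetaA p hc', mul_zero]
    exact zero_mem _

variable (p) in
def weightGens : Set (Theta p) :=
  insert (thetaMu p) (Set.range (thetaBN p) ∪ Set.range (thetaAN p))

theorem thetaMk_X_mem_weightGens (v : ThetaGen p) : thetaMk p (X v) ∈ weightGens p := by
  cases v with
  | u => exact .inr (.inl ⟨0, thetaBN_zero p⟩)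
  | mu => exact .inl rfl
  | a i => exact .inr (.inr ⟨i, thetaAN_val p i⟩)
  | b j => exact .inr (.inl ⟨j, thetaBN_val p j⟩)

theorem thetaMu_pow_mul_mem_thetaSpan (hp : 2 ≤ p) (m : ℕ) {g : Theta p}
    (hg : g ∈ weightGens p) : thetaMu p ^ m * g ∈ thetaSpan p := by
  rcases hg with rfl | ⟨c, rfl⟩ | ⟨c, rfl⟩
  · rw [← pow_succ]
    exact thetaMu_pow_mem_thetaSpan _
  · simpa [thetaMu_pow_mul_thetaBN] using thetaU_pow_mul_thetaBN_mem_thetaSpan hp 0 (p * m + c)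
  · simpa [thetaMu_pow_mul_thetaAN] using thetaU_pow_mul_thetaAN_mem_thetaSpan hp 0 (p * m + c)

theorem thetaU_pow_mul_thetaBN_mul_mem_thetaSpan (hp : 2 ≤ p) (k c : ℕ) {g : Theta p}
    (hg : g ∈ weightGens p) : thetaU p ^ k * thetaBN p c * g ∈ thetaSpan p := by
  rcases hg with rfl | ⟨c', rfl⟩ | ⟨c', rfl⟩
  · have h := thetaMu_pow_mul_thetaBN p 1 c
    rw [pow_one] at h
    rw [mul_assoc, mul_comm (thetaBN p c), h]
    exact thetaU_pow_mul_thetaBN_mem_thetaSpan hp _ _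
  · rw [mul_assoc, thetaBN_mul_thetaBN, ← mul_assoc, ← pow_succ]
    exact thetaU_pow_mul_thetaBN_mem_thetaSpan hp _ _
  · rw [mul_assoc, mul_comm (thetaBN p c), thetaAN_mul_thetaBN, ← mul_assoc, ← pow_succ]
    exact thetaU_pow_mul_thetaAN_mem_thetaSpan hp _ _

theorem thetaU_pow_mul_thetaAN_mul_mem_thetaSpan (hp : 2 ≤ p) (k c : ℕ) {g : Theta p}
    (hg : g ∈ weightGens p) : thetaU p ^ k * thetaAN p c * g ∈ thetaSpan p := by
  rcases hg with rfl | ⟨c', rfl⟩ | ⟨c', rfl⟩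
  · have h := thetaMu_pow_mul_thetaAN p 1 c
    rw [pow_one] at h
    rw [mul_assoc, mul_comm (thetaAN p c), h]
    exact thetaU_pow_mul_thetaAN_mem_thetaSpan hp _ _
  · rw [mul_assoc, thetaAN_mul_thetaBN, ← mul_assoc, ← pow_succ]
    exact thetaU_pow_mul_thetaAN_mem_thetaSpan hp _ _
  · rw [mul_assoc, thetaAN_mul_thetaAN, mul_zero]
    exact zero_mem _

theorem mul_mem_thetaSpan (hp : 2 ≤ p) {x g : Theta p} (hx : x ∈ thetaSpan p)
    (hg : g ∈ weightGens p) : x * g ∈ thetaSpan p := by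
  rw [thetaSpan, ← Submodule.span_union] at hx
  induction hx using Submodule.span_induction with
  | mem x hx =>
    rcases hx with ⟨m, rfl⟩ | ⟨m | ⟨k, c⟩ | ⟨k, c⟩, rfl⟩
    · rw [kerGen_eq]
      exact thetaU_pow_mul_thetaAN_mul_mem_thetaSpan hp _ _ hg
    · exact thetaMu_pow_mul_mem_thetaSpan hp m hg
    · exact thetaU_pow_mul_thetaBN_mul_mem_thetaSpan hp _ _ hg
    · exact thetaU_pow_mul_thetaAN_mul_mem_thetaSpan hp _ _ hg
  | zero => simp
  | add x y _ _ hx hy => rw [add_mul]; exact add_mem hx hy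
  | smul a x _ hx => rw [smul_mul_assoc]; exact Submodule.smul_mem _ a hx

theorem thetaSpan_eq_top (hp : 2 ≤ p) : thetaSpan p = ⊤ := by
  rw [eq_top_iff]
  rintro x -
  obtain ⟨f, rfl⟩ := thetaMk_surjective p x
  induction f using MvPolynomial.induction_on with
  | C a =>
    rw [← MvPolynomial.algebraMap_eq, AlgHom.commutes, Algebra.algebraMap_eq_smul_one,
      ← pow_zero (thetaMu p)]
    exact Submodule.smul_mem _ a (thetaMu_pow_mem_thetaSpan 0)
  | add f g hf hg => rw [map_add]; exact add_mem hf hg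
  | mul_X f v hf => rw [map_mul]; exact mul_mem_thetaSpan hp hf (thetaMk_X_mem_weightGens v)

end ThetaSpanning

section KuAlg

variable (p : ℕ)

def kuMk : MvPolynomial (Fin 3) (ZMod p) →ₐ[ZMod p] KuAlg p := Ideal.Quotient.mkₐ (ZMod p) _

theorem kuMk_surjective : Function.Surjective (kuMk p) := Ideal.Quotient.mkₐ_surjective _ _

theorem kuRelIdeal_eq_span_monomial :
    kuRelIdeal p = Ideal.span ((monomial · (1 : ZMod p)) ''
      {Finsupp.single 0 (p - 1), Finsupp.single 1 2}) := by
  rw [kuRelIdeal, Set.image_pair, X_pow_eq_monomial, X_pow_eq_monomial]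

theorem kuU_pow_sub_one : kuU p ^ (p - 1) = 0 := by
  change kuMk p (X 0) ^ (p - 1) = 0
  rw [← map_pow]
  exact Ideal.Quotient.eq_zero_iff_mem.mpr (Ideal.subset_span (.inl rfl))

theorem kuD_sq : kuD p ^ 2 = 0 := by
  change kuMk p (X 1) ^ 2 = 0
  rw [← map_pow]
  exact Ideal.Quotient.eq_zero_iff_mem.mpr (Ideal.subset_span (.inr rfl))

theorem kuMk_monomial_expTriple (a b c : ℕ) :
    kuMk p (monomial (expTriple a b c) 1) = kuU p ^ a * kuD p ^ b * kuK p ^ c := by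
  rw [monomial_expTriple, map_mul, map_mul, map_pow, map_pow, map_pow]
  rfl

theorem kuU_pow_sub_two_mul_kuU (hp : 2 ≤ p) : kuU p ^ (p - 2) * kuU p = 0 := by
  rw [← pow_succ, show p - 2 + 1 = p - 1 by omega, kuU_pow_sub_one]

end KuAlg

section ThetaHom

variable (p : ℕ) [NeZero p]

def thetaGenValue : ThetaGen p → KuAlg p
  | .u => kuU p
  | .mu => kuK p ^ p
  | .a i => kuU p * kuD p * kuK p ^ (i : ℕ)
  | .b j => kuU p * kuK p ^ (j : ℕ)

theorem aeval_thetaGenValue_eq_zero (hp : 2 ≤ p) :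
    ∀ r ∈ thetaRels p, aeval (thetaGenValue p) r = 0 := by
  have hu := kuU_pow_sub_two_mul_kuU p hp
  rintro r (rfl | rfl | ⟨i, -, rfl⟩ | ⟨j, -, rfl⟩ | ⟨i, j, k, -, -, -, hk, rfl⟩ |
    ⟨i, j, k, -, -, hk, rfl⟩ | ⟨i, j, k, -, -, -, hk, rfl⟩ | ⟨i, j, k, -, -, hk, rfl⟩ |
    ⟨i, j, rfl⟩) <;>
    simp only [map_sub, map_mul, map_pow, aeval_X, thetaGenValue, Fin.val_zero, pow_zero, mul_one,
      sub_self, kuU_pow_sub_one]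
  · linear_combination kuD p * kuK p ^ (i : ℕ) * hu
  · linear_combination kuK p ^ (j : ℕ) * hu
  · rw [hk, pow_add]; ring
  · rw [hk, pow_add]; ring
  · have h := congrArg (kuK p ^ ·) hk
    simp only [pow_add] at h
    linear_combination -kuU p ^ 2 * h
  · have h := congrArg (kuK p ^ ·) hk
    simp only [pow_add] at h
    linear_combination -kuU p ^ 2 * kuD p * h
  · linear_combination kuU p ^ 2 * kuK p ^ ((i : ℕ) + j) * kuD_sq p

def thetaHom (hp : 2 ≤ p) : Theta p →ₐ[ZMod p] KuAlg p :=
  Ideal.Quotient.liftₐ _ (aeval (thetaGenValue p)) fun _ hr =>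
    Ideal.span_le.mpr (fun r hr => RingHom.mem_ker.mpr (aeval_thetaGenValue_eq_zero p hp r hr)) hr

theorem thetaValues_thetaHom (hp : 2 ≤ p) : thetaValues p (thetaHom p hp) :=
  ⟨aeval_X _ _, aeval_X _ _, fun _ => aeval_X _ _, fun _ _ => aeval_X _ _⟩

variable {p}

theorem thetaValues.map_thetaB {θ : Theta p →ₐ[ZMod p] KuAlg p} (hθ : thetaValues p θ)
    (j : Fin p) : θ (thetaB p j) = kuU p * kuK p ^ (j : ℕ) := by
  rcases Nat.eq_zero_or_pos j with hj | hj
  · rw [show j = 0 from Fin.ext hj, thetaB_zero, hθ.1, Fin.val_zero, pow_zero, mul_one]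
  · exact hθ.2.2.2 j hj

theorem thetaValues.map_thetaMk_X {θ : Theta p →ₐ[ZMod p] KuAlg p} (hθ : thetaValues p θ)
    (v : ThetaGen p) : θ (thetaMk p (X v)) = thetaGenValue p v := by
  cases v with
  | u => exact hθ.1
  | mu => exact hθ.2.1
  | a i => exact hθ.2.2.1 i
  | b j => exact hθ.map_thetaB j

theorem thetaValues.unique {θ₁ θ₂ : Theta p →ₐ[ZMod p] KuAlg p} (h₁ : thetaValues p θ₁)
    (h₂ : thetaValues p θ₂) : θ₁ = θ₂ :=
  Ideal.Quotient.algHom_ext _ <| MvPolynomial.algHom_ext fun v =>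
    (h₁.map_thetaMk_X v).trans (h₂.map_thetaMk_X v).symm

end ThetaHom

section ThetaValues

variable {p : ℕ} [NeZero p] {θ : Theta p →ₐ[ZMod p] KuAlg p}

open Fin.NatCast in
theorem thetaValues.map_thetaBN (hθ : thetaValues p θ) (c : ℕ) :
    θ (thetaBN p c) = kuU p * kuK p ^ c := by
  rw [thetaBN, map_mul, map_pow, hθ.2.1, hθ.map_thetaB, Fin.val_natCast, ← pow_mul,
    mul_left_comm, ← pow_add, Nat.div_add_mod]

open Fin.NatCast in
theorem thetaValues.map_thetaAN (hθ : thetaValues p θ) (c : ℕ) :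
    θ (thetaAN p c) = kuU p * kuD p * kuK p ^ c := by
  rw [thetaAN, map_mul, map_pow, hθ.2.1, hθ.2.2.1, Fin.val_natCast, ← pow_mul,
    mul_left_comm, ← pow_add, Nat.div_add_mod]

theorem thetaValues.map_kerGen (hθ : thetaValues p θ) (hp : 2 ≤ p) (m : ℕ) :
    θ (kerGen p m) = 0 := by
  rw [kerGen_eq, map_mul, map_pow, hθ.map_thetaAN, hθ.1]
  linear_combination kuD p * kuK p ^ (p * m + (p - 1)) * kuU_pow_sub_two_mul_kuU p hp

variable (p) in
def normalExp : NormalIndex p → Fin 3 →₀ ℕ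
  | .inl m => expTriple 0 0 (p * m)
  | .inr (.inl (k, c)) => expTriple (k + 1) 0 c
  | .inr (.inr (k, c)) => expTriple (k + 1) 1 c

theorem normalExp_injective : Function.Injective (normalExp p) := by
  rintro (m | ⟨k, c⟩ | ⟨k, c⟩) (m' | ⟨k', c'⟩ | ⟨k', c'⟩) h <;>
    simp only [normalExp, expTriple_inj] at h <;> try omega
  · rw [Nat.eq_of_mul_eq_mul_left (NeZero.pos p) h.2.2]
  · rw [Fin.ext (by omega : (k : ℕ) = k'), h.2.2]
  · rw [Fin.ext (by omega : (k : ℕ) = k'), h.2.2]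

theorem thetaValues.map_normalForm (hθ : thetaValues p θ) (i : NormalIndex p) :
    θ (normalForm p i) = kuMk p (monomial (normalExp p i) 1) := by
  rcases i with m | ⟨k, c⟩ | ⟨k, c⟩ <;>
    simp only [normalForm, normalExp, kuMk_monomial_expTriple, map_mul, map_pow, hθ.1, hθ.2.1,
      hθ.map_thetaBN, hθ.map_thetaAN] <;> ring

theorem thetaValues.linearIndependent_normalForm (hθ : thetaValues p θ) (hp : 2 ≤ p) :
    LinearIndependent (ZMod p) (θ ∘ normalForm p) := by
  rw [show θ ∘ normalForm p = _ from funext hθ.map_normalForm]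
  refine linearIndependent_mk_monomial normalExp_injective fun x hx i => ?_
  rw [kuRelIdeal_eq_span_monomial] at hx
  refine coeff_eq_zero_of_mem_span_monomial hx ?_
  rintro t (rfl | rfl) <;> rw [Finsupp.single_le_iff] <;>
    rcases i with m | ⟨⟨k, hk⟩, c⟩ | ⟨⟨k, hk⟩, c⟩ <;> simp [normalExp] <;> omega

theorem thetaValues.ker_eq (hθ : thetaValues p θ) (hp : 2 ≤ p) :
    LinearMap.ker θ.toLinearMap = Submodule.span (ZMod p) (Set.range (kerGen p)) := by
  have hK : Submodule.span (ZMod p) (Set.range (kerGen p)) ≤ LinearMap.ker θ.toLinearMap :=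
    Submodule.span_le.mpr (by rintro _ ⟨m, rfl⟩; exact hθ.map_kerGen hp m)
  have hN :=
    Submodule.range_ker_disjoint (f := θ.toLinearMap) (hθ.linearIndependent_normalForm hp)
  refine le_antisymm (fun x hx => ?_) hK
  have hx' : x ∈ thetaSpan p := thetaSpan_eq_top hp ▸ Submodule.mem_top
  obtain ⟨y, hy, z, hz, rfl⟩ := Submodule.mem_sup.mp hx'
  have hz' : z ∈ LinearMap.ker θ.toLinearMap := by
    have h := LinearMap.mem_ker.mp hx
    rwa [map_add, LinearMap.mem_ker.mp (hK hy), zero_add, ← LinearMap.mem_ker] at h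
  rwa [Submodule.disjoint_def.mp hN z hz hz', add_zero]

theorem thetaValues.kuU_mul_monomial_mem_range (hθ : thetaValues p θ) (a b c : ℕ) :
    kuU p * (kuU p ^ a * kuD p ^ b * kuK p ^ c) ∈ LinearMap.range θ.toLinearMap :=
  match b with
  | 0 => ⟨thetaU p ^ a * thetaBN p c, by
      simp only [AlgHom.toLinearMap_apply, map_mul, map_pow, hθ.1, hθ.map_thetaBN]; ring⟩
  | 1 => ⟨thetaU p ^ a * thetaAN p c, by
      simp only [AlgHom.toLinearMap_apply, map_mul, map_pow, hθ.1, hθ.map_thetaAN]; ring⟩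
  | b + 2 => by
      simp only [pow_add, kuD_sq, mul_zero, zero_mul]
      exact zero_mem _

theorem thetaValues.kuU_mul_mem_range (hθ : thetaValues p θ) (r : KuAlg p) :
    kuU p * r ∈ LinearMap.range θ.toLinearMap := by
  obtain ⟨f, rfl⟩ := kuMk_surjective p r
  induction f using MvPolynomial.induction_on' with
  | monomial e a =>
    rw [show monomial e a = a • monomial e 1 by rw [smul_monomial, smul_eq_mul, mul_one],
      map_smul, mul_smul_comm, ← expTriple_apply_self e, kuMk_monomial_expTriple]
    exact Submodule.smul_mem _ a (hθ.kuU_mul_monomial_mem_range _ _ _)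
  | add f g hf hg => rw [map_add, mul_add]; exact add_mem hf hg

theorem thetaValues.range_eq (hθ : thetaValues p θ) (hp : 2 ≤ p) :
    LinearMap.range θ.toLinearMap =
      Subalgebra.toSubmodule (Algebra.adjoin (ZMod p) {kuK p ^ p}) ⊔
        Submodule.restrictScalars (ZMod p) (Ideal.span {kuU p}) := by
  apply le_antisymm
  · rw [LinearMap.range_eq_map, ← thetaSpan_eq_top hp, thetaSpan, Submodule.map_sup,
      Submodule.map_span, Submodule.map_span]
    refine sup_le (Submodule.span_le.mpr ?_) (Submodule.span_le.mpr ?_)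
    · rintro _ ⟨_, ⟨m, rfl⟩, rfl⟩
      rw [SetLike.mem_coe, AlgHom.toLinearMap_apply, hθ.map_kerGen hp]
      exact zero_mem _
    · rintro _ ⟨_, ⟨m | ⟨k, c⟩ | ⟨k, c⟩, rfl⟩, rfl⟩ <;>
        rw [SetLike.mem_coe, AlgHom.toLinearMap_apply]
      · rw [normalForm, map_pow, hθ.2.1]
        exact Submodule.mem_sup_left ((Subalgebra.mem_toSubmodule _).mpr
          (pow_mem (Algebra.subset_adjoin (Set.mem_singleton _)) m))
      · rw [normalForm, map_mul, map_pow, hθ.1, hθ.map_thetaBN]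
        exact Submodule.mem_sup_right
          (Ideal.mem_span_singleton'.mpr ⟨kuU p ^ (k : ℕ) * kuK p ^ c, by ring⟩)
      · rw [normalForm, map_mul, map_pow, hθ.1, hθ.map_thetaAN]
        exact Submodule.mem_sup_right
          (Ideal.mem_span_singleton'.mpr ⟨kuU p ^ (k : ℕ) * kuD p * kuK p ^ c, by ring⟩)
  · refine sup_le (fun x hx => ?_) (fun x hx => ?_)
    · obtain ⟨y, rfl⟩ := Algebra.adjoin_le (S := θ.range)
        (Set.singleton_subset_iff.mpr ⟨thetaMu p, hθ.2.1⟩)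
        ((Subalgebra.mem_toSubmodule _).mp hx)
      exact ⟨y, rfl⟩
    · obtain ⟨r, rfl⟩ := Ideal.mem_span_singleton'.mp hx
      rw [mul_comm]
      exact hθ.kuU_mul_mem_range r

end ThetaValues

section Directness

variable (p : ℕ)

def kuToPolynomial (hp : 2 ≤ p) : KuAlg p →ₐ[ZMod p] Polynomial (ZMod p) :=
  Ideal.Quotient.liftₐ _ (aeval ![0, 0, Polynomial.X]) fun _ hx => by
    refine (Ideal.span_le (I := RingHom.ker (aeval (R := ZMod p) (S₁ := Polynomial (ZMod p))
      ![0, 0, Polynomial.X]))).mpr ?_ hx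
    rintro _ (rfl | rfl) <;> simp [zero_pow (show p - 1 ≠ 0 by omega)]

theorem adjoin_kuK_pow_inf_span_kuU (hp : 2 ≤ p) :
    Subalgebra.toSubmodule (Algebra.adjoin (ZMod p) {kuK p ^ p}) ⊓
      Submodule.restrictScalars (ZMod p) (Ideal.span {kuU p}) = ⊥ := by
  refine eq_bot_iff.mpr fun x hx => ?_
  obtain ⟨hxA, hxI⟩ := Submodule.mem_inf.mp hx
  obtain ⟨q, rfl⟩ : ∃ q, Polynomial.aeval (kuK p ^ p) q = x := by
    rwa [Subalgebra.mem_toSubmodule, Algebra.adjoin_singleton_eq_range_aeval] at hxA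
  obtain ⟨r, hr⟩ := Ideal.mem_span_singleton'.mp hxI
  have hψu : kuToPolynomial p hp (kuU p) = 0 := aeval_X _ _
  have hψκ : kuToPolynomial p hp (kuK p) = Polynomial.X := aeval_X _ _
  have hq : Polynomial.expand (ZMod p) p q = 0 := by
    have h := congrArg (kuToPolynomial p hp) hr
    rwa [map_mul, hψu, mul_zero, ← Polynomial.aeval_algHom_apply, map_pow, hψκ,
      ← Polynomial.comp_eq_aeval, ← Polynomial.expand_eq_comp_X_pow, eq_comm] at h
  rw [Polynomial.expand_eq_zero (by omega)] at hq
  simp [hq]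

end Directness

section KerGenLinearIndependent

variable (p : ℕ)

def goodExponents : AddSubmonoid (Fin 3 →₀ ℕ) where
  carrier := {e | e 0 ≤ e 1 ∧ (e 1 = 0 → p ∣ e 2)}
  add_mem' := by
    rintro e e' ⟨h, hd⟩ ⟨h', hd'⟩
    refine ⟨by simp only [Finsupp.coe_add, Pi.add_apply]; omega, fun h0 => ?_⟩
    simp only [Finsupp.coe_add, Pi.add_apply] at h0 ⊢
    exact dvd_add (hd (by omega)) (hd' (by omega))
  zero_mem' := by simp

theorem expTriple_mem_goodExponents {a b c : ℕ} :
    expTriple a b c ∈ goodExponents p ↔ a ≤ b ∧ (b = 0 → p ∣ c) := by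
  simp [goodExponents]

def xyzGenValue : ThetaGen p → MvPolynomial (Fin 3) (ZMod p)
  | .u => monomial (expTriple 0 1 0) 1
  | .mu => monomial (expTriple 0 0 p) 1
  | .a i => monomial (expTriple 1 1 i) 1
  | .b j => monomial (expTriple 0 1 j) 1

def xyzMap : MvPolynomial (ThetaGen p) (ZMod p) →ₐ[ZMod p] MvPolynomial (Fin 3) (ZMod p) :=
  aeval (xyzGenValue p)

theorem xyzMap_mem_restrictSupport (f : MvPolynomial (ThetaGen p) (ZMod p)) :
    xyzMap p f ∈ restrictSupport (ZMod p) (goodExponents p : Set (Fin 3 →₀ ℕ)) := by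
  have h : Algebra.adjoin (ZMod p) (Set.range (xyzGenValue p)) ≤
      restrictSupportSubalgebra (goodExponents p) := by
    refine Algebra.adjoin_le (Set.range_subset_iff.mpr fun v => ?_)
    cases v <;> simp [restrictSupportSubalgebra, xyzGenValue, goodExponents]
  exact h ((Algebra.adjoin_range_eq_range_aeval (ZMod p) (xyzGenValue p)).symm ▸ ⟨f, rfl⟩)

def kerExp (n : ℕ) : Fin 3 →₀ ℕ := expTriple 1 (p - 1) (p * n + (p - 1))

@[simp] theorem xyzMap_X (v : ThetaGen p) : xyzMap p (X v) = xyzGenValue p v := aeval_X _ _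

theorem coeff_kerExp_xyzMap_mul_monomial (n : ℕ) (g : MvPolynomial (ThetaGen p) (ZMod p))
    {a b c : ℕ} (h : a ≤ 1 → b ≤ p - 1 → c ≤ p * n + (p - 1) →
      ¬ (1 - a ≤ p - 1 - b ∧ (p - 1 - b = 0 → p ∣ p * n + (p - 1) - c))) :
    coeff (kerExp p n) (xyzMap p g * monomial (expTriple a b c) 1) = 0 :=
  coeff_mul_monomial_eq_zero (xyzMap_mem_restrictSupport p g) fun hle => by
    rw [kerExp, expTriple_le_expTriple] at hle
    rw [kerExp, expTriple_tsub, SetLike.mem_coe, expTriple_mem_goodExponents]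
    exact h hle.1 hle.2.1 hle.2.2

theorem coeff_kerExp_xyzMap_eq_zero_of_mem [NeZero p] (hp : 2 ≤ p)
    {x : MvPolynomial (ThetaGen p) (ZMod p)} (hx : x ∈ Ideal.span (thetaRels p)) (n : ℕ) :
    coeff (kerExp p n) (xyzMap p x) = 0 := by
  suffices h : ∀ g, coeff (kerExp p n) (xyzMap p (g * x)) = 0 by simpa using h 1
  induction hx using Submodule.span_induction with
  | mem r hr =>
    intro g
    rw [map_mul]
    rcases hr with rfl | rfl | ⟨i, hi, rfl⟩ | ⟨j, hj, rfl⟩ | ⟨i, j, k, -, -, -, hk, rfl⟩ |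
      ⟨i, j, k, -, -, hk, rfl⟩ | ⟨i, j, k, -, -, -, hk, rfl⟩ | ⟨i, j, k, -, -, hk, rfl⟩ |
      ⟨i, j, rfl⟩ <;>
      simp only [map_sub, map_mul, map_pow, xyzMap_X, xyzGenValue, monomial_mul, monomial_pow,
        one_pow, mul_one, mul_zero, zero_add, add_zero, expTriple_add, expTriple_nsmul,
        Fin.val_zero, sub_self, coeff_zero]
    · exact coeff_kerExp_xyzMap_mul_monomial p n g (by omega)
    · refine coeff_kerExp_xyzMap_mul_monomial p n g fun _ _ _ ⟨_, hdvd⟩ =>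
        Nat.not_dvd_of_pos_of_lt (n := p - 1 - i) (by omega) (by omega)
          ((Nat.dvd_add_right (dvd_mul_right p n)).mp ?_)
      rw [show p * n + (p - 1 - i) = p * n + (p - 1) - i by omega]
      exact hdvd (by omega)
    · exact coeff_kerExp_xyzMap_mul_monomial p n g (by omega)
    · rw [hk, sub_self, mul_zero, coeff_zero]
    · rw [hk, sub_self, mul_zero, coeff_zero]
    · rw [add_comm p, hk, sub_self, mul_zero, coeff_zero]
    · rw [add_comm p, hk, sub_self, mul_zero, coeff_zero]
    · exact coeff_kerExp_xyzMap_mul_monomial p n g (by omega)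
  | zero => simp
  | add x y _ _ hx hy => intro g; rw [mul_add, map_add, coeff_add, hx, hy, add_zero]
  | smul a x _ hx => intro g; rw [smul_eq_mul, ← mul_assoc]; exact hx (g * a)

variable [NeZero p]

def kerRep (m : ℕ) : MvPolynomial (ThetaGen p) (ZMod p) :=
  X .mu ^ m * X .u ^ (p - 2) * X (.a ⟨p - 1, Nat.sub_lt (NeZero.pos p) one_pos⟩)

theorem thetaMk_kerRep (m : ℕ) : thetaMk p (kerRep p m) = kerGen p m := by
  rw [kerRep, map_mul, map_mul, map_pow, map_pow]
  rfl

theorem xyzMap_kerRep (hp : 2 ≤ p) (m : ℕ) : xyzMap p (kerRep p m) = monomial (kerExp p m) 1 := by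
  simp only [kerRep, kerExp, map_mul, map_pow, xyzMap_X, xyzGenValue, monomial_pow, monomial_mul,
    one_pow, mul_one, expTriple_nsmul, expTriple_add]
  congr 2
  rw [expTriple_inj, mul_comm m p]
  omega

theorem kerExp_inj {m n : ℕ} : kerExp p m = kerExp p n ↔ m = n := by
  rw [kerExp, kerExp, expTriple_inj]
  constructor
  · exact fun h => Nat.eq_of_mul_eq_mul_left (NeZero.pos p) (by omega)
  · rintro rfl; simp

theorem linearIndependent_kerGen (hp : 2 ≤ p) : LinearIndependent (ZMod p) (kerGen p) := by
  refine linearIndependent_iff'ₛ.mpr fun s f g hfg n hn => ?_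
  have hmem :
      ∑ m ∈ s, f m • kerRep p m - ∑ m ∈ s, g m • kerRep p m ∈ Ideal.span (thetaRels p) := by
    rw [← Ideal.Quotient.eq_zero_iff_mem, map_sub, sub_eq_zero]
    change thetaMk p _ = thetaMk p _
    simpa [map_sum, thetaMk_kerRep] using hfg
  have h := coeff_kerExp_xyzMap_eq_zero_of_mem p hp hmem n
  simpa [map_sum, coeff_sum, xyzMap_kerRep p hp, coeff_monomial, kerExp_inj, hn, sub_eq_zero]
    using h

end KerGenLinearIndependent

/-- For `p ≥ 3` prime there is a unique `F_p`-algebra homomorphism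
`θ : Θ → R` with `θ(u) = u`, `θ(μ) = κ^p`, `θ(a_i) = u·δ·κ^i` and `θ(b_j) = u·κ^j`.
Its image is `F_p[κ^p] + u·R`, and this sum is direct; its kernel is the free
`F_p[μ]`-submodule of `Θ` generated by `u^{p-2}·a_{p-1}`. -/
theorem statement5 (p : ℕ) [NeZero p] (hp3 : 3 ≤ p) :
    (∃! θ : Theta p →ₐ[ZMod p] KuAlg p, thetaValues p θ) ∧
    ∀ θ : Theta p →ₐ[ZMod p] KuAlg p, thetaValues p θ →
      -- the image is F_p[κ^p] + u·R ...
      (LinearMap.range θ.toLinearMap =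
        Subalgebra.toSubmodule (Algebra.adjoin (ZMod p) {kuK p ^ p}) ⊔
          Submodule.restrictScalars (ZMod p) (Ideal.span {kuU p})) ∧
      -- ... and the sum is direct
      (Subalgebra.toSubmodule (Algebra.adjoin (ZMod p) {kuK p ^ p}) ⊓
          Submodule.restrictScalars (ZMod p) (Ideal.span {kuU p}) = ⊥) ∧
      -- the elements μ^m·u^{p-2}·a_{p-1} are linearly independent ...
      LinearIndependent (ZMod p)
        (fun m : ℕ => thetaMu p ^ m * thetaU p ^ (p - 2) * thetaA p ⟨p - 1, by omega⟩) ∧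
      -- ... and span the kernel of θ
      Submodule.span (ZMod p)
          (Set.range (fun m : ℕ =>
            thetaMu p ^ m * thetaU p ^ (p - 2) * thetaA p ⟨p - 1, by omega⟩)) =
        LinearMap.ker θ.toLinearMap := by
  have hp : 2 ≤ p := by omega
  refine ⟨⟨thetaHom p hp, thetaValues_thetaHom p hp,
      fun θ hθ => hθ.unique (thetaValues_thetaHom p hp)⟩, fun θ hθ => ?_⟩
  exact ⟨hθ.range_eq hp, adjoin_kuK_pow_inf_span_kuU p hp, linearIndependent_kerGen p hp,
    (hθ.ker_eq hp).symm⟩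
end
end

section
/- Let p ≥ 5 be a prime and let R be the graded-commutative F_p-algebra (F_p[u]/(u^{p−1})) ⊗ Λ_{F_p}(λ1, δ) ⊗ F_p[κ], graded by assigning |u| = 2, |λ1| = 2p−1, |δ| = 1 and |κ| = 2p. Let σ: R → R be an F_p-linear graded derivation of degree +1, i.e. σ(R_n) ⊆ R_{n+1} for all n and σ(x·y) = σ(x)·y + (−1)^n·x·σ(y) for all homogeneous x ∈ R_n and all y ∈ R. If σ(u) = u·δ and σ(u·κ) = 0, then σ(κ) = −κ·δ. -/
noncomputable section

/-- The monomial `u^s·λ₁^a·δ^e·κ^t` in a ring containing elements `u`, `λ₁`, `δ`, `κ`,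
where the exponent of `u` is restricted to `s ≤ p - 2`. -/
def kuMon {R : Type*} [Ring R] (pp : ℕ) (u l1 d k : R)
    (i : Fin (pp - 1) × Bool × Bool × ℕ) : R :=
  u ^ (i.1 : ℕ) * (if i.2.1 then l1 else 1) * (if i.2.2.1 then d else 1) * k ^ i.2.2.2

/-- The degree of the monomial `u^s·λ₁^a·δ^e·κ^t`, where `|u| = 2`, `|λ₁| = 2p-1`,
`|δ| = 1` and `|κ| = 2p`. -/
def kuDeg (pp : ℕ) (i : Fin (pp - 1) × Bool × Bool × ℕ) : ℕ :=
  2 * (i.1 : ℕ) + (if i.2.1 then 2 * pp - 1 else 0) + (if i.2.2.1 then 1 else 0) +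
    2 * pp * i.2.2.2

/-- The homogeneous component `R_n`: the span of the monomials of degree `n`. -/
def kuPiece {R : Type*} (p : ℕ) [Ring R] [Algebra (ZMod p) R]
    (u l1 d k : R) (n : ℕ) : Submodule (ZMod p) R :=
  Submodule.span (ZMod p) (kuMon p u l1 d k '' {i | kuDeg p i = n})

lemma kuClassify (p : ℕ) (hp5 : 5 ≤ p) (i : Fin (p - 1) × Bool × Bool × ℕ)
    (h : kuDeg p i = 2 * p + 1) :
    i = ((⟨1, by omega⟩ : Fin (p-1)), true, false, 0) ∨
      i = ((⟨0, by omega⟩ : Fin (p-1)), false, true, 1) := by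
  obtain ⟨⟨s, hs⟩, a, e, t⟩ := i
  simp only [kuDeg] at h
  rcases t with _ | _ | n
  · cases a <;> cases e <;> simp at h ⊢ <;> omega
  · cases a <;> cases e <;> simp at h ⊢ <;> omega
  · exfalso
    have hx : 2 * p * (n + 2) = 2 * (p * n) + 4 * p := by ring
    rw [hx] at h
    generalize p * n = m at h
    cases a <;> cases e <;> simp at h <;> omega

/-- Let `R = (F_p[u]/(u^{p-1})) ⊗ Λ(λ₁, δ) ⊗ F_p[κ]` (`p ≥ 5`), presented
via its monomial basis and relations, graded by `|u| = 2`, `|λ₁| = 2p-1`, `|δ| = 1`,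
`|κ| = 2p`.  If `σ : R → R` is a linear graded derivation of degree `+1` with
`σ(u) = u·δ` and `σ(u·κ) = 0`, then `σ(κ) = -κ·δ`. -/
theorem statement10 (p : ℕ) (hp : p.Prime) (hp5 : 5 ≤ p)
    (R : Type*) [Ring R] [Algebra (ZMod p) R] (u l1 d k : R)
    -- monomial basis of R
    (hind : LinearIndependent (ZMod p) (kuMon p u l1 d k))
    (hspan : Submodule.span (ZMod p) (Set.range (kuMon p u l1 d k)) = ⊤)
    -- relations
    (hut : u ^ (p - 1) = 0)
    (hl1sq : l1 * l1 = 0) (hdsq : d * d = 0)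
    (hanti : l1 * d = -(d * l1))
    (huc1 : u * l1 = l1 * u) (huc2 : u * d = d * u) (huc3 : u * k = k * u)
    (hkc1 : k * l1 = l1 * k) (hkc2 : k * d = d * k)
    -- σ is a linear graded derivation of degree +1
    (σ : R →ₗ[ZMod p] R)
    (hσdeg : ∀ (n : ℕ) (x : R), x ∈ kuPiece p u l1 d k n → σ x ∈ kuPiece p u l1 d k (n + 1))
    (hσder : ∀ (n : ℕ) (x : R), x ∈ kuPiece p u l1 d k n →
      ∀ y : R, σ (x * y) = σ x * y + ((-1 : ZMod p) ^ n) • (x * σ y))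
    -- the two given values
    (hσu : σ u = u * d) (hσuk : σ (u * k) = 0) :
    σ k = -(k * d) := by
  classical
  -- u is homogeneous of degree 2
  have hu2 : u ∈ kuPiece p u l1 d k 2 := by
    apply Submodule.subset_span
    exact ⟨((⟨1, by omega⟩ : Fin (p-1)), false, false, 0), by simp [kuDeg], by simp [kuMon]⟩
  -- k is homogeneous of degree 2p
  have hk2p : k ∈ kuPiece p u l1 d k (2 * p) := by
    apply Submodule.subset_span
    exact ⟨((⟨0, by omega⟩ : Fin (p-1)), false, false, 1), by simp [kuDeg], by simp [kuMon]⟩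
  -- σ k lies in the span of the two degree-(2p+1) monomials
  have hpiece : kuPiece p u l1 d k (2 * p + 1) ≤
      Submodule.span (ZMod p) {u * l1, d * k} := by
    apply Submodule.span_le.mpr
    rintro x ⟨i, hi, rfl⟩
    rcases kuClassify p hp5 i hi with h | h <;> rw [h]
    · have h1 : kuMon p u l1 d k ((⟨1, by omega⟩ : Fin (p-1)), true, false, 0) = u * l1 := by
        simp [kuMon]
      rw [h1]
      exact Submodule.subset_span (Set.mem_insert _ _)
    · have h1 : kuMon p u l1 d k ((⟨0, by omega⟩ : Fin (p-1)), false, true, 1) = d * k := by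
        simp [kuMon]
      rw [h1]
      exact Submodule.subset_span (Set.mem_insert_of_mem _ rfl)
  have hσk : σ k ∈ Submodule.span (ZMod p) {u * l1, d * k} :=
    hpiece (hσdeg (2 * p) k hk2p)
  obtain ⟨c1, c2, hc⟩ := Submodule.mem_span_pair.mp hσk
  -- the derivation property in degree 2 gives u * σ k = -(u * d * k)
  have h0 := hσder 2 u hu2 k
  rw [hσu, hσuk, neg_one_sq, one_smul] at h0
  have h1 : u * σ k = -(u * d * k) :=
    eq_neg_of_add_eq_zero_right h0.symm
  rw [← hc, mul_add, mul_smul_comm, mul_smul_comm, ← mul_assoc, ← mul_assoc,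
    ← pow_two] at h1
  have h2 : c1 • (u ^ 2 * l1) + (c2 + 1) • (u * d * k) = 0 := by
    rw [add_smul, one_smul, ← add_assoc, h1]
    exact neg_add_cancel _
  -- linear independence of the monomials u²λ₁ and uδκ
  set j1 : Fin (p-1) × Bool × Bool × ℕ := ((⟨2, by omega⟩ : Fin (p-1)), true, false, 0) with hj1
  set j2 : Fin (p-1) × Bool × Bool × ℕ := ((⟨1, by omega⟩ : Fin (p-1)), false, true, 1) with hj2
  have hv1 : kuMon p u l1 d k j1 = u ^ 2 * l1 := by simp [kuMon, hj1]
  have hv2 : kuMon p u l1 d k j2 = u * d * k := by simp [kuMon, hj2, mul_assoc]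
  have hne : j1 ≠ j2 := by simp [hj1, hj2, Prod.ext_iff]
  set g : (Fin (p-1) × Bool × Bool × ℕ) → ZMod p :=
    fun i => if i = j1 then c1 else if i = j2 then c2 + 1 else 0 with hg
  have hsum : ∑ i ∈ ({j1, j2} : Finset _), g i • kuMon p u l1 d k i = 0 := by
    rw [Finset.sum_insert (by simpa using hne), Finset.sum_singleton]
    have hgj1 : g j1 = c1 := by simp [hg]
    have hgj2 : g j2 = c2 + 1 := by simp [hg, hne.symm]
    rw [hgj1, hgj2, hv1, hv2]
    exact h2
  have hall := linearIndependent_iff'.mp hind {j1, j2} g hsum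
  have hc1 : c1 = 0 := by
    have := hall j1 (Finset.mem_insert_self _ _)
    simpa [hg] using this
  have hc2 : c2 = -1 := by
    have := hall j2 (Finset.mem_insert_of_mem (Finset.mem_singleton_self _))
    simp [hg, hne.symm] at this
    linear_combination this
  rw [← hc, hc1, hc2, zero_smul, zero_add, neg_smul, one_smul, ← hkc2]
end
end
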